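/- arXiv:1208.3971 — 8 statements merged into one kernel-verified Lean document; each statement's English description precedes it below -/
import Mathlib

section
/- If f : ℝⁿ → ℝ is Lipschitz and directionally differentiable at x, then sup_{0<|h|≤r} |(f(x+h)-f(x))/|h| - D_{h/|h|} f(x)| → 0 as r → 0⁺. -/
/-!
For every `t`, the difference quotient `θ ↦ (f (x + t • θ) - f x) / t` is `K`-Lipschitz, so these
quotients form an equicontinuous family. An equicontinuous family converging pointwise on a
compact set converges uniformly there; on the unit sphere this is the claimed uniformity in the
direction `h / ‖h‖`.
-/

open Filter Topology

theorem EquicontinuousOn.tendstoUniformlyOn_of_tendsto {ι X α : Type*} [TopologicalSpace X]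
    [UniformSpace α] {F : ι → X → α} {f : X → α} {S : Set X} {l : Filter ι}
    (hS : IsCompact S) (hF : EquicontinuousOn F S)
    (h : ∀ x ∈ S, Tendsto (F · x) l (𝓝 (f x))) : TendstoUniformlyOn F f l S := by
  have hunif := (EquicontinuousOn.tendsto_uniformOnFun_iff_pi' (𝔖 := {S}) (by simpa)
    (by simpa) l f).mpr (tendsto_pi_nhds.mpr fun x => h x (by simpa using x.2))
  exact UniformOnFun.tendsto_iff_tendstoUniformlyOn.mp hunif S rfl

section DirectionalDiffQuot

variable {E : Type*} [NormedAddCommGroup E] [NormedSpace ℝ E]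

noncomputable def directionalDiffQuot (f : E → ℝ) (x : E) (t : ℝ) (θ : E) : ℝ :=
  (f (x + t • θ) - f x) / t

theorem lipschitzWith_directionalDiffQuot {K : NNReal} {f : E → ℝ} (hf : LipschitzWith K f)
    (x : E) (t : ℝ) : LipschitzWith K (directionalDiffQuot f x t) := by
  refine LipschitzWith.of_dist_le_mul fun θ θ' => ?_
  rcases eq_or_ne t 0 with rfl | ht
  · simp only [directionalDiffQuot, div_zero, dist_self]
    positivity
  have hdist : dist (x + t • θ) (x + t • θ') = |t| * dist θ θ' := by
    rw [dist_add_left, dist_smul₀, Real.norm_eq_abs]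
  calc dist (directionalDiffQuot f x t θ) (directionalDiffQuot f x t θ')
      = dist (f (x + t • θ)) (f (x + t • θ')) / |t| := by
        simp only [directionalDiffQuot, Real.dist_eq, ← sub_div, sub_sub_sub_cancel_right,
          abs_div]
    _ ≤ K * (|t| * dist θ θ') / |t| := by
        rw [← hdist]
        gcongr
        exact hf.dist_le_mul _ _
    _ = K * dist θ θ' := by field_simp

theorem tendstoUniformlyOn_sphere_directionalDiffQuot [ProperSpace E] {K : NNReal} {f : E → ℝ}
    (hf : LipschitzWith K f) (x : E) {D : E → ℝ}
    (hD : ∀ θ : E, ‖θ‖ = 1 → Tendsto (directionalDiffQuot f x · θ) (𝓝[>] 0) (𝓝 (D θ))) :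
    TendstoUniformlyOn (directionalDiffQuot f x) D (𝓝[>] 0) (Metric.sphere 0 1) :=
  have hequi := LipschitzWith.uniformEquicontinuous _ K (lipschitzWith_directionalDiffQuot hf x)
  (hequi.equicontinuous.equicontinuousOn _).tendstoUniformlyOn_of_tendsto (isCompact_sphere 0 1)
    fun θ hθ => hD θ (by simpa using hθ)

end DirectionalDiffQuot

/-- If `f` is Lipschitz and directionally differentiable at `x`, then
`sup_{0<|h|≤r} |(f(x+h)-f(x))/|h| - D_{h/|h|} f(x)| → 0` as `r → 0⁺`. -/
theorem uniform_directional_approximation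
    (n : ℕ) (K : NNReal) (f : EuclideanSpace ℝ (Fin n) → ℝ)
    (hf : LipschitzWith K f) (x : EuclideanSpace ℝ (Fin n))
    (D : EuclideanSpace ℝ (Fin n) → ℝ)
    (hD : ∀ θ : EuclideanSpace ℝ (Fin n), ‖θ‖ = 1 →
      Tendsto (fun lam : ℝ => (f (x + lam • θ) - f x) / lam) (𝓝[>] (0 : ℝ)) (𝓝 (D θ))) :
    ∀ ε : ℝ, 0 < ε → ∃ r : ℝ, 0 < r ∧ ∀ h : EuclideanSpace ℝ (Fin n), h ≠ 0 → ‖h‖ ≤ r →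
      |(f (x + h) - f x) / ‖h‖ - D (‖h‖⁻¹ • h)| ≤ ε := by
  intro ε hε
  have hevent := Metric.tendstoUniformlyOn_iff.mp
    (tendstoUniformlyOn_sphere_directionalDiffQuot hf x hD) ε hε
  obtain ⟨r, hr, hclose⟩ := mem_nhdsGT_iff_exists_Ioc_subset.mp hevent
  refine ⟨r, hr, fun h hh hhr => ?_⟩
  have hnorm : 0 < ‖h‖ := norm_pos_iff.mpr hh
  have hunit : ‖h‖⁻¹ • h ∈ Metric.sphere (0 : EuclideanSpace ℝ (Fin n)) 1 := by
    simp [norm_smul, hnorm.ne']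
  have hdist := hclose ⟨hnorm, hhr⟩ _ hunit
  rw [directionalDiffQuot, smul_smul, mul_inv_cancel₀ hnorm.ne', one_smul, Real.dist_eq,
    abs_sub_comm] at hdist
  exact hdist.le
end

section
/- A k-tangential subset of ℝⁿ has Hausdorff dimension at most k. -/
/-!
Near each of its points a tangential set lies in a thin cone around its tangent plane `V`:
`‖P_{V⊥} h‖ ≤ ‖P_V h‖`, hence `‖h‖ ≤ 2 ‖P_V h‖`, for all small admissible steps `h`. Sorting the
points by a scale `1/(i+1)` at which this holds and by an element of a countable dense set of
operators lying within `1/8` of `P_V` cuts the set into countably many pieces. On a ball of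
radius half the scale inside a piece, all the projections are `1/4`-close to that of the centre,
so the projection onto the centre's `k`-plane satisfies `‖h‖ ≤ 4 ‖P h‖`: it is antilipschitz, and
the ball has Hausdorff dimension at most `k`. Hausdorff dimension is local and countably stable.
-/

open Filter Topology MeasureTheory ENNReal

/-- `E ⊆ ℝⁿ` is `k`-tangential: at each `x ∈ E` there is a `k`-dimensional subspace `V`
such that for sequences `x + h j ∈ E` with `h j → 0`, the component of `h j`
orthogonal to `V` is `o(|component in V|)`. -/
def IsTangentialSet (n k : ℕ) (E : Set (EuclideanSpace ℝ (Fin n))) : Prop :=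
  ∀ x ∈ E, ∃ V : Submodule ℝ (EuclideanSpace ℝ (Fin n)),
    Module.finrank ℝ V = k ∧
    ∀ h : ℕ → EuclideanSpace ℝ (Fin n),
      (∀ j, x + h j ∈ E) → Tendsto h atTop (𝓝 0) →
      ∀ ε : ℝ, 0 < ε → ∀ᶠ j in atTop,
        ‖(Submodule.orthogonalProjectionOnto Vᗮ (h j) : EuclideanSpace ℝ (Fin n))‖ ≤
          ε * ‖(Submodule.orthogonalProjectionOnto V (h j) : EuclideanSpace ℝ (Fin n))‖

open Set Metric Module

theorem dimH_le_of_forall_exists_mem_nhdsWithin {X : Type*} [EMetricSpace X]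
    [SecondCountableTopology X] {s : Set X} {d : ℝ≥0∞}
    (h : ∀ x ∈ s, ∃ t ∈ 𝓝[s] x, dimH t ≤ d) : dimH s ≤ d := by
  by_contra! hd
  obtain ⟨x, hx, hlt⟩ := exists_mem_nhdsWithin_lt_dimH_of_lt_dimH hd
  obtain ⟨t, ht, htd⟩ := h x hx
  exact (hlt t ht).not_ge htd

theorem dimH_le_finrank_of_le_mul_dist {X G : Type*} [MetricSpace X] [NormedAddCommGroup G]
    [NormedSpace ℝ G] [FiniteDimensional ℝ G] {s : Set X} {f : X → G} (K : NNReal)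
    (hf : ∀ x ∈ s, ∀ y ∈ s, dist x y ≤ K * dist (f x) (f y)) : dimH s ≤ finrank ℝ G := by
  have hanti : AntilipschitzWith K (s.domRestrict f) :=
    antilipschitzWith_iff_le_mul_dist.2 fun x y => hf x x.2 y y.2
  calc dimH s = dimH (univ : Set s) := by
        rw [← (isometry_subtype_coe : Isometry ((↑) : s → X)).dimH_image, image_univ,
          Subtype.range_coe]
    _ ≤ dimH (s.domRestrict f '' univ) := hanti.le_dimH_image _
    _ ≤ dimH (univ : Set G) := dimH_mono (subset_univ _)
    _ = finrank ℝ G := Real.dimH_univ_eq_finrank G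

theorem ContinuousLinearMap.norm_le_four_mul_of_opNorm_sub_le {𝕜 E G : Type*}
    [NontriviallyNormedField 𝕜] [SeminormedAddCommGroup E] [NormedSpace 𝕜 E]
    [SeminormedAddCommGroup G] [NormedSpace 𝕜 G] {P P₀ : E →L[𝕜] G} {h : E}
    (hP : ‖h‖ ≤ 2 * ‖P h‖) (hPP₀ : ‖P - P₀‖ ≤ 1 / 4) : ‖h‖ ≤ 4 * ‖P₀ h‖ := by
  have : ‖P h‖ ≤ ‖P₀ h‖ + ‖P - P₀‖ * ‖h‖ := by
    calc ‖P h‖ = ‖P₀ h + (P - P₀) h‖ := by simp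
      _ ≤ ‖P₀ h‖ + ‖P - P₀‖ * ‖h‖ := norm_add_le_of_le le_rfl ((P - P₀).le_opNorm h)
  nlinarith [norm_nonneg h]

section InnerProductSpace

variable {F : Type*} [NormedAddCommGroup F] [InnerProductSpace ℝ F]

theorem Submodule.norm_le_two_mul_norm_starProjection (V : Submodule ℝ F)
    [V.HasOrthogonalProjection] {h : F}
    (hh : ‖Vᗮ.starProjection h‖ ≤ ‖V.starProjection h‖) : ‖h‖ ≤ 2 * ‖V.starProjection h‖ := by
  calc ‖h‖ = ‖V.starProjection h + Vᗮ.starProjection h‖ := by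
        rw [V.starProjection_add_starProjection_orthogonal]
    _ ≤ 2 * ‖V.starProjection h‖ := by
        linarith [norm_add_le (V.starProjection h) (Vᗮ.starProjection h)]

variable [FiniteDimensional ℝ F]

def tangentPiece (k : ℕ) (E : Set F) (δ : ℝ) (Q : F →L[ℝ] F) : Set F :=
  {y ∈ E | ∃ V : Submodule ℝ F, finrank ℝ V = k ∧ ‖V.starProjection - Q‖ < 1 / 8 ∧
    ∀ z ∈ E, dist z y < δ → ‖Vᗮ.starProjection (z - y)‖ ≤ ‖V.starProjection (z - y)‖}

theorem dimH_tangentPiece_le (k : ℕ) (E : Set F) {δ : ℝ} (hδ : 0 < δ) (Q : F →L[ℝ] F) :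
    dimH (tangentPiece k E δ Q) ≤ k := by
  refine dimH_le_of_forall_exists_mem_nhdsWithin fun x hx => ?_
  obtain ⟨-, V, hVk, hVQ, -⟩ := hx
  refine ⟨tangentPiece k E δ Q ∩ ball x (δ / 2),
    inter_mem_nhdsWithin _ (ball_mem_nhds x (half_pos hδ)), ?_⟩
  rw [← hVk]
  refine dimH_le_finrank_of_le_mul_dist (f := V.orthogonalProjectionOnto) 4 fun y hy z hz => ?_
  obtain ⟨⟨-, W, -, hWQ, hWcone⟩, hyx⟩ := hy
  obtain ⟨⟨hzE, -⟩, hzx⟩ := hz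
  have hzy : dist z y < δ := by
    linarith [dist_triangle_right z y x, mem_ball.1 hyx, mem_ball.1 hzx]
  have hWV : ‖W.starProjection - V.starProjection‖ ≤ 1 / 4 := by
    linarith [norm_sub_le_norm_sub_add_norm_sub W.starProjection Q V.starProjection,
      norm_sub_rev V.starProjection Q]
  have := ContinuousLinearMap.norm_le_four_mul_of_opNorm_sub_le
    (W.norm_le_two_mul_norm_starProjection (hWcone z hzE hzy)) hWV
  rw [dist_comm y, dist_comm (V.orthogonalProjectionOnto y), dist_eq_norm, dist_eq_norm,
    ← map_sub]
  exact_mod_cast this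

end InnerProductSpace

theorem IsTangentialSet.eventually_norm_starProjection_orthogonal_le {n k : ℕ}
    {E : Set (EuclideanSpace ℝ (Fin n))} (hE : IsTangentialSet n k E)
    {x : EuclideanSpace ℝ (Fin n)} (hx : x ∈ E) :
    ∃ V : Submodule ℝ (EuclideanSpace ℝ (Fin n)), finrank ℝ V = k ∧ ∀ ε > 0,
      ∀ᶠ h in 𝓝 0, x + h ∈ E → ‖Vᗮ.starProjection h‖ ≤ ε * ‖V.starProjection h‖ := by
  classical
  obtain ⟨V, hVk, hV⟩ := hE x hx
  refine ⟨V, hVk, fun ε hε => eventually_iff_seq_eventually.2 fun h hh => ?_⟩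
  -- Steps leaving `E` are replaced by `0`, so that the definition applies to the sequence.
  set h' : ℕ → EuclideanSpace ℝ (Fin n) := fun j => if x + h j ∈ E then h j else 0
  have hmem : ∀ j, x + h' j ∈ E := fun j => by by_cases hj : x + h j ∈ E <;> simp [h', hj, hx]
  have htend : Tendsto h' atTop (𝓝 0) :=
    squeeze_zero_norm (fun j => by by_cases hj : x + h j ∈ E <;> simp [h', hj])
      (tendsto_zero_iff_norm_tendsto_zero.1 hh)
  exact (hV h' hmem htend ε hε).mono fun j hj hjE => by simpa [h', hjE] using hj

theorem IsTangentialSet.subset_iUnion_tangentPiece {n k : ℕ}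
    {E : Set (EuclideanSpace ℝ (Fin n))} (hE : IsTangentialSet n k E)
    {u : ℕ → EuclideanSpace ℝ (Fin n) →L[ℝ] EuclideanSpace ℝ (Fin n)}
    (hu : DenseRange u) : E ⊆ ⋃ (i : ℕ) (m : ℕ), tangentPiece k E (1 / (i + 1)) (u m) := by
  intro x hx
  obtain ⟨V, hVk, hcone⟩ := hE.eventually_norm_starProjection_orthogonal_le hx
  obtain ⟨δ, hδ, hball⟩ := Metric.eventually_nhds_iff.1 (hcone 1 one_pos)
  obtain ⟨i, hi⟩ := exists_nat_one_div_lt hδ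
  obtain ⟨m, hm⟩ := hu.exists_dist_lt V.starProjection (by norm_num : (0 : ℝ) < 1 / 8)
  refine mem_iUnion₂.2 ⟨i, m, hx, V, hVk, by rwa [← dist_eq_norm], fun z hz hzx => ?_⟩
  have hzx' : dist (z - x) 0 < δ := by rw [dist_zero_right, ← dist_eq_norm]; exact hzx.trans hi
  simpa only [one_mul] using hball hzx' (by rwa [add_sub_cancel])

/-- A `k`-tangential subset of `ℝⁿ` has Hausdorff dimension at most `k`. -/
theorem tangential_dimH_le
    (n k : ℕ) (E : Set (EuclideanSpace ℝ (Fin n))) (hE : IsTangentialSet n k E) :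
    dimH E ≤ (k : ℝ≥0∞) := by
  obtain ⟨u, hu⟩ := TopologicalSpace.exists_dense_seq
    (EuclideanSpace ℝ (Fin n) →L[ℝ] EuclideanSpace ℝ (Fin n))
  calc dimH E ≤ dimH (⋃ (i : ℕ) (m : ℕ), tangentPiece k E (1 / (i + 1)) (u m)) :=
        dimH_mono (hE.subset_iUnion_tangentPiece hu)
    _ ≤ k := by
      simp only [dimH_iUnion]
      exact iSup₂_le fun i m => dimH_tangentPiece_le k E (by positivity) (u m)
end

section
/- Let f : ℝⁿ → ℝ be a Lipschitz function that is directionally differentiable at every point (all one-sided directional derivatives exist everywhere). Then the set of points where f fails to be (Fréchet) differentiable is σ-porous. -/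
set_option maxHeartbeats 1600000

open Filter Topology Metric Set

namespace NDP

variable {n : ℕ} {K : NNReal} {f : EuclideanSpace ℝ (Fin n) → ℝ}

noncomputable def quotA {n : ℕ} (f : EuclideanSpace ℝ (Fin n) → ℝ)
    (x θ : EuclideanSpace ℝ (Fin n)) (lam : ℝ) : ℝ :=
  (f (x + lam • θ) - f x) / lam

variable {n : ℕ} {K : NNReal} {f : EuclideanSpace ℝ (Fin n) → ℝ}

lemma quot_sub_le (hf : LipschitzWith K f) {lam : ℝ} (hl : 0 < lam)
    (x θ θ' : EuclideanSpace ℝ (Fin n)) :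
    |quotA f x θ lam - quotA f x θ' lam| ≤ K * ‖θ - θ'‖ := by
  have h := hf.dist_le_mul (x + lam • θ) (x + lam • θ')
  rw [dist_eq_norm] at h
  have h2 : ‖(x + lam • θ) - (x + lam • θ')‖ = lam * ‖θ - θ'‖ := by
    rw [add_sub_add_left_eq_sub, ← smul_sub, norm_smul, Real.norm_eq_abs,
      abs_of_pos hl]
  unfold quotA
  rw [div_sub_div_same]
  have : f (x + lam • θ) - f x - (f (x + lam • θ') - f x)
      = f (x + lam • θ) - f (x + lam • θ') := by ring
  rw [abs_div, abs_of_pos hl, div_le_iff₀ hl, this]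
  calc |f (x + lam • θ) - f (x + lam • θ')|
      = dist (f (x + lam • θ)) (f (x + lam • θ')) := (Real.dist_eq _ _).symm
    _ ≤ K * ‖(x + lam • θ) - (x + lam • θ')‖ := h
    _ = ↑K * ‖θ - θ'‖ * lam := by rw [h2]; ring

lemma tendsto_quot_smul {x θ : EuclideanSpace ℝ (Fin n)} {d c : ℝ} (hc : 0 < c)
    (h : Tendsto (quotA f x θ) (𝓝[>] 0) (𝓝 d)) :
    Tendsto (quotA f x (c • θ)) (𝓝[>] 0) (𝓝 (c * d)) := by
  have hmap : Tendsto (fun lam : ℝ => c * lam) (𝓝[>] (0:ℝ)) (𝓝[>] (0:ℝ)) := by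
    apply tendsto_nhdsWithin_of_tendsto_nhds_of_eventually_within
    · have : Tendsto (fun lam : ℝ => c * lam) (𝓝 (0:ℝ)) (𝓝 (c * 0)) :=
        (continuous_const.mul continuous_id).tendsto 0
      simpa using this.mono_left nhdsWithin_le_nhds
    · exact eventually_mem_nhdsWithin.mono fun lam hlam => mul_pos hc hlam
  have h2 : Tendsto (fun lam => c * quotA f x θ (c * lam)) (𝓝[>] (0:ℝ)) (𝓝 (c * d)) :=
    (h.comp hmap).const_mul c
  refine h2.congr' ?_
  filter_upwards [eventually_mem_nhdsWithin] with lam (hlam : (0:ℝ) < lam)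
  unfold quotA
  rw [smul_smul, mul_comm lam c, ← smul_smul]
  rw [mul_div_assoc']
  rw [mul_comm c lam, mul_comm c (f _ - f x)]
  rw [mul_div_mul_right _ _ hc.ne']

lemma exists_dirDeriv
    (hD : ∀ x θ : EuclideanSpace ℝ (Fin n), ‖θ‖ = 1 → ∃ d : ℝ,
      Tendsto (fun lam : ℝ => (f (x + lam • θ) - f x) / lam) (𝓝[>] (0 : ℝ)) (𝓝 d))
    (x θ : EuclideanSpace ℝ (Fin n)) :
    ∃ d : ℝ, Tendsto (quotA f x θ) (𝓝[>] 0) (𝓝 d) := by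
  rcases eq_or_ne θ 0 with rfl | hθ
  · refine ⟨0, ?_⟩
    have : quotA f x (0 : EuclideanSpace ℝ (Fin n)) = fun _ => 0 := by
      funext lam; unfold quotA; simp
    rw [this]; exact tendsto_const_nhds
  · have hnorm : (0:ℝ) < ‖θ‖ := norm_pos_iff.2 hθ
    set θ₀ := ‖θ‖⁻¹ • θ with hθ₀
    have hu : ‖θ₀‖ = 1 := by
      rw [hθ₀, norm_smul, Real.norm_eq_abs, abs_inv, abs_of_pos hnorm,
        inv_mul_cancel₀ hnorm.ne']
    obtain ⟨d, hd⟩ := hD x θ₀ hu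
    have hd' : Tendsto (quotA f x θ₀) (𝓝[>] 0) (𝓝 d) := hd
    refine ⟨‖θ‖ * d, ?_⟩
    have := tendsto_quot_smul hnorm hd'
    have hsm : ‖θ‖ • θ₀ = θ := by
      rw [hθ₀, smul_smul, mul_inv_cancel₀ hnorm.ne', one_smul]
    rwa [hsm] at this


lemma quot_zero (x : EuclideanSpace ℝ (Fin n)) :
    quotA f x (0 : EuclideanSpace ℝ (Fin n)) = fun _ => 0 := by
  funext lam; unfold quotA; simp

lemma diff_of_additive (hf : LipschitzWith K f) (x : EuclideanSpace ℝ (Fin n))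
    (φ : EuclideanSpace ℝ (Fin n) → ℝ)
    (hφ : ∀ θ, Tendsto (quotA f x θ) (𝓝[>] 0) (𝓝 (φ θ)))
    (hadd : ∀ u v, φ (u + v) = φ u + φ v) :
    DifferentiableAt ℝ f x := by
  have hzero : φ 0 = 0 := by
    have h1 : Tendsto (quotA f x 0) (𝓝[>] (0:ℝ)) (𝓝 (0:ℝ)) := by
      rw [quot_zero]; exact tendsto_const_nhds
    exact tendsto_nhds_unique (hφ 0) h1
  have hpos : ∀ (c : ℝ), 0 < c → ∀ θ, φ (c • θ) = c * φ θ := fun c hc θ =>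
    tendsto_nhds_unique (hφ (c • θ)) (tendsto_quot_smul hc (hφ θ))
  have hneg : ∀ θ, φ (-θ) = -φ θ := by
    intro θ
    have := hadd θ (-θ)
    simp only [add_neg_cancel, hzero] at this
    linarith
  have hsmul : ∀ (c : ℝ) (θ), φ (c • θ) = c * φ θ := by
    intro c θ
    rcases lt_trichotomy c 0 with hc | rfl | hc
    · have : φ (c • θ) = φ (-((-c) • θ)) := by rw [neg_smul, neg_neg]
      rw [this, hneg, hpos (-c) (by linarith) θ]; ring
    · simp [hzero]
    · exact hpos c hc θ
  set L : EuclideanSpace ℝ (Fin n) →ₗ[ℝ] ℝ :=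
    { toFun := φ, map_add' := hadd, map_smul' := hsmul }
  set L' : EuclideanSpace ℝ (Fin n) →L[ℝ] ℝ := LinearMap.toContinuousLinearMap L
  have hL' : ∀ θ, L' θ = φ θ := fun θ => rfl
  suffices hfd : HasFDerivAt f L' x from hfd.differentiableAt
  rw [hasFDerivAt_iff_isLittleO_nhds_zero, Asymptotics.isLittleO_iff]
  intro c hc
  set M : ℝ := (K : ℝ) + ‖L'‖ + 1 with hM
  have hM0 : 0 < M := by positivity
  set ε' : ℝ := c / (2 * M) with hε'
  have hε'0 : 0 < ε' := by positivity
  obtain ⟨t, htfin, htcov⟩ := (totallyBounded_iff.1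
    (isCompact_sphere (0 : EuclideanSpace ℝ (Fin n)) 1).totallyBounded) ε' hε'0
  have hev : ∀ᶠ lam in 𝓝[>] (0:ℝ), ∀ θ ∈ t, |quotA f x θ lam - φ θ| < c / 2 := by
    rw [htfin.eventually_all]
    intro θ _
    exact (hφ θ).eventually (eventually_abs_sub_lt (φ θ) (by linarith : (0:ℝ) < c/2))
  rw [eventually_iff, Metric.mem_nhdsWithin_iff] at hev
  obtain ⟨δ, hδ0, hδ⟩ := hev
  rw [Metric.eventually_nhds_iff]
  refine ⟨δ, hδ0, ?_⟩
  intro h hh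
  rcases eq_or_ne h 0 with rfl | hne
  · simp
  · set lam : ℝ := ‖h‖ with hlam
    have hlam0 : 0 < lam := norm_pos_iff.2 hne
    set θ' : EuclideanSpace ℝ (Fin n) := lam⁻¹ • h with hθ'
    have hθ's : θ' ∈ Metric.sphere (0 : EuclideanSpace ℝ (Fin n)) 1 := by
      simp only [mem_sphere_iff_norm, sub_zero, hθ', norm_smul, Real.norm_eq_abs,
        abs_inv, abs_of_pos hlam0]
      rw [inv_mul_cancel₀ hlam0.ne']
    obtain ⟨θ, hθt, hθb⟩ := mem_iUnion₂.1 (htcov hθ's)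
    have hdist : ‖θ' - θ‖ < ε' := by
      rw [← dist_eq_norm]; exact hθb
    have hlamδ : lam < δ := by
      rw [hlam]; rwa [dist_zero_right] at hh
    have hmem : lam ∈ Metric.ball (0:ℝ) δ ∩ Ioi 0 := by
      constructor
      · rw [Metric.mem_ball, Real.dist_eq, sub_zero, abs_of_pos hlam0]; exact hlamδ
      · exact hlam0
    have hq : |quotA f x θ lam - φ θ| < c / 2 := hδ hmem θ hθt
    have hq2 : |quotA f x θ' lam - quotA f x θ lam| ≤ K * ‖θ' - θ‖ :=
      quot_sub_le hf hlam0 x θ' θ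
    have hL2 : |L' θ - L' θ'| ≤ ‖L'‖ * ‖θ' - θ‖ := by
      rw [← map_sub]
      calc |L' (θ - θ')| ≤ ‖L'‖ * ‖θ - θ'‖ := L'.le_opNorm _
        _ = ‖L'‖ * ‖θ' - θ‖ := by rw [norm_sub_rev]
    have key : |quotA f x θ' lam - L' θ'| ≤ c := by
      have e1 : quotA f x θ' lam - L' θ' =
          (quotA f x θ lam - φ θ) + (quotA f x θ' lam - quotA f x θ lam) +
          (L' θ - L' θ') := by rw [hL' θ]; ring
      have hKM : (K : ℝ) * ‖θ' - θ‖ + ‖L'‖ * ‖θ' - θ‖ ≤ M * ε' := by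
        have hn : ‖θ' - θ‖ ≤ ε' := hdist.le
        have : ((K:ℝ) + ‖L'‖) * ‖θ' - θ‖ ≤ M * ε' := by
          apply mul_le_mul _ hn (norm_nonneg _) hM0.le
          rw [hM]; have : (0:ℝ) ≤ ‖L'‖ := norm_nonneg _; linarith
        linarith [this]
      have hMε : M * ε' = c / 2 := by
        rw [hε']; field_simp
      calc |quotA f x θ' lam - L' θ'| ≤ |quotA f x θ lam - φ θ| +
            |quotA f x θ' lam - quotA f x θ lam| + |L' θ - L' θ'| := by
            rw [e1]; exact (abs_add_le _ _).trans (by gcongr; exact abs_add_le _ _)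
        _ ≤ c / 2 + ((K:ℝ) * ‖θ' - θ‖ + ‖L'‖ * ‖θ' - θ‖) := by
            have := hq.le; linarith
        _ ≤ c / 2 + c / 2 := by rw [← hMε]; linarith
        _ = c := by ring
    have hrepr : f (x + h) - f x - L' h = lam * (quotA f x θ' lam - L' θ') := by
      have hh' : h = lam • θ' := by
        rw [hθ', smul_smul, mul_inv_cancel₀ hlam0.ne', one_smul]
      rw [mul_sub]
      unfold quotA
      rw [← hh']
      rw [mul_div_cancel₀ _ hlam0.ne']
      have : L' h = lam * L' θ' := by
        rw [hh', map_smul, smul_eq_mul]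
      rw [this]
    rw [Real.norm_eq_abs, hrepr, abs_mul, abs_of_pos hlam0]
    calc lam * |quotA f x θ' lam - L' θ'| ≤ lam * c := by
          exact mul_le_mul_of_nonneg_left key hlam0.le
      _ = c * ‖h‖ := by rw [hlam]; ring


def QSet (f : EuclideanSpace ℝ (Fin n) → ℝ) (u v : EuclideanSpace ℝ (Fin n))
    (cu cv cw ε : ℝ) (m : ℕ) : Set (EuclideanSpace ℝ (Fin n)) :=
  {x | 0 < ε ∧ 10 * ε ≤ |cw - cu - cv| ∧ 0 < m ∧
    ∀ lam : ℝ, 0 < lam → lam ≤ 1 / m →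
      |f (x + lam • u) - f x - lam * cu| ≤ 2 * ε * lam ∧
      |f (x + lam • v) - f x - lam * cv| ≤ 2 * ε * lam ∧
      |f (x + lam • (u + v)) - f x - lam * cw| ≤ 2 * ε * lam}

lemma QSet_porous (hf : LipschitzWith K f) (u v : EuclideanSpace ℝ (Fin n))
    (cu cv cw ε : ℝ) (m : ℕ) (x : EuclideanSpace ℝ (Fin n))
    (hx : x ∈ QSet f u v cu cv cw ε m) :
    ∃ δ : ℝ, 0 < δ ∧ ∀ r : ℝ, 0 < r → r < 1 →
      ∃ y : EuclideanSpace ℝ (Fin n),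
        Metric.ball y (δ * r) ⊆ Metric.ball x r \ QSet f u v cu cv cw ε m := by
  obtain ⟨hε, hgap, hm, hxq⟩ := hx
  have hm' : (0:ℝ) < 1 / m := by positivity
  set δ0 : ℝ := min (ε / (K + 1)) 1 with hδ0
  have hδ0pos : 0 < δ0 := lt_min (by positivity) one_pos
  have hδ0le1 : δ0 ≤ 1 := min_le_right _ _
  have hKδ : (K : ℝ) * δ0 ≤ ε := by
    have h1 : δ0 ≤ ε / (K + 1) := min_le_left _ _
    have hK1 : (0:ℝ) < (K:ℝ) + 1 := by positivity
    calc (K:ℝ) * δ0 ≤ (K:ℝ) * (ε / (K+1)) := by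
          exact mul_le_mul_of_nonneg_left h1 K.coe_nonneg
      _ ≤ ((K:ℝ)+1) * (ε / (K+1)) := by
          apply mul_le_mul_of_nonneg_right (by linarith) (by positivity)
      _ = ε := by field_simp
  set δ : ℝ := δ0 * min (1 / (‖u‖ + 2)) (1 / m) with hδ
  have hδpos : 0 < δ := by
    apply mul_pos hδ0pos
    exact lt_min (by positivity) hm'
  refine ⟨δ, hδpos, ?_⟩
  intro r hr hr1
  set lam : ℝ := min (r / (‖u‖ + 2)) (1 / m) with hlam
  have hlampos : 0 < lam := lt_min (by positivity) hm'
  have hlamm : lam ≤ 1 / m := min_le_right _ _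
  refine ⟨x + lam • u, ?_⟩
  have hδr : δ * r ≤ δ0 * lam := by
    rw [hδ, mul_assoc]
    apply mul_le_mul_of_nonneg_left _ hδ0pos.le
    have h1 : min (1 / (‖u‖ + 2)) (1 / m) * r ≤ r / (‖u‖ + 2) := by
      calc min (1 / (‖u‖ + 2)) (1 / m) * r ≤ (1 / (‖u‖ + 2)) * r :=
            mul_le_mul_of_nonneg_right (min_le_left _ _) hr.le
        _ = r / (‖u‖ + 2) := by ring
    have h2 : min (1 / (‖u‖ + 2)) (1 / m) * r ≤ 1 / m := by
      calc min (1 / (‖u‖ + 2)) (1 / m) * r ≤ (1 / m) * r :=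
            mul_le_mul_of_nonneg_right (min_le_right _ _) hr.le
        _ ≤ (1 / m) * 1 := by
            apply mul_le_mul_of_nonneg_left hr1.le hm'.le
        _ = 1 / m := mul_one _
    exact le_min h1 h2
  intro z hz
  have hz' : dist z (x + lam • u) < δ0 * lam := lt_of_lt_of_le hz hδr
  constructor
  · -- z ∈ ball x r
    rw [Metric.mem_ball]
    have hd1 : dist (x + lam • u) x = lam * ‖u‖ := by
      rw [dist_eq_norm, add_sub_cancel_left, norm_smul, Real.norm_eq_abs,
        abs_of_pos hlampos]
    have hl2 : lam ≤ r / (‖u‖ + 2) := min_le_left _ _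
    calc dist z x ≤ dist z (x + lam • u) + dist (x + lam • u) x := dist_triangle _ _ _
      _ < δ0 * lam + lam * ‖u‖ := by rw [hd1]; linarith
      _ ≤ 1 * lam + lam * ‖u‖ := by
          have := mul_le_mul_of_nonneg_right hδ0le1 hlampos.le; linarith
      _ = lam * (‖u‖ + 1) := by ring
      _ ≤ (r / (‖u‖ + 2)) * (‖u‖ + 1) := by
          apply mul_le_mul_of_nonneg_right hl2 (by positivity)
      _ < (r / (‖u‖ + 2)) * (‖u‖ + 2) := by
          apply mul_lt_mul_of_pos_left (by linarith) (by positivity)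
      _ = r := by field_simp
  · -- z ∉ QSet
    intro hzQ
    obtain ⟨_, _, _, hzq⟩ := hzQ
    have hxlam := hxq lam hlampos hlamm
    have hzlam := hzq lam hlampos hlamm
    -- notation
    set A := f (x + lam • (u + v)) - f x with hA
    set B := f (x + lam • u) - f x with hB
    set C := f (z + lam • v) - f z with hC
    set D := f z - f (x + lam • u) with hD
    set E := f (x + lam • (u + v)) - f (z + lam • v) with hE
    have hDbound : |D| ≤ ε * lam := by
      have := hf.dist_le_mul z (x + lam • u)
      rw [Real.dist_eq] at this
      have h2 : dist z (x + lam • u) ≤ δ0 * lam := hz'.le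
      calc |D| ≤ (K:ℝ) * dist z (x + lam • u) := this
        _ ≤ (K:ℝ) * (δ0 * lam) := by
            exact mul_le_mul_of_nonneg_left h2 K.coe_nonneg
        _ = ((K:ℝ) * δ0) * lam := by ring
        _ ≤ ε * lam := mul_le_mul_of_nonneg_right hKδ hlampos.le
    have hEbound : |E| ≤ ε * lam := by
      have := hf.dist_le_mul (x + lam • (u + v)) (z + lam • v)
      rw [Real.dist_eq] at this
      have hdd : dist (x + lam • (u + v)) (z + lam • v) ≤ δ0 * lam := by
        have : x + lam • (u + v) = (x + lam • u) + lam • v := by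
          rw [smul_add, add_assoc]
        rw [this, dist_add_right, dist_comm]
        exact hz'.le
      calc |E| ≤ (K:ℝ) * dist (x + lam • (u + v)) (z + lam • v) := this
        _ ≤ (K:ℝ) * (δ0 * lam) := mul_le_mul_of_nonneg_left hdd K.coe_nonneg
        _ = ((K:ℝ) * δ0) * lam := by ring
        _ ≤ ε * lam := mul_le_mul_of_nonneg_right hKδ hlampos.le
    have hABCDE : A - B - C - D - E = 0 := by
      rw [hA, hB, hC, hD, hE]; ring
    have hfinal : |lam * (cw - cu - cv)| ≤ 8 * ε * lam := by
      have h1 := hxlam.2.2  -- |A - lam*cw| ≤ 2ε lam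
      have h2 := hxlam.1    -- |B - lam*cu| ≤ 2ε lam
      have h3 := hzlam.2.1  -- |C - lam*cv| ≤ 2ε lam
      have habs : |lam * (cw - cu - cv)| ≤ |A - lam*cw| + |B - lam*cu| + |C - lam*cv| + |D| + |E| := by
        have : lam * (cw - cu - cv) = -(A - lam * cw) + (B - lam * cu) + (C - lam * cv) + D + E := by
          linarith [hABCDE]
        rw [this]
        calc |(-(A - lam * cw) + (B - lam * cu) + (C - lam * cv) + D + E)|
            ≤ |(-(A - lam * cw) + (B - lam * cu) + (C - lam * cv) + D)| + |E| := abs_add_le _ _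
          _ ≤ |(-(A - lam * cw) + (B - lam * cu) + (C - lam * cv))| + |D| + |E| := by
              gcongr; exact abs_add_le _ _
          _ ≤ |(-(A - lam * cw) + (B - lam * cu))| + |C - lam * cv| + |D| + |E| := by
              gcongr; exact abs_add_le _ _
          _ ≤ |(-(A - lam * cw))| + |B - lam * cu| + |C - lam * cv| + |D| + |E| := by
              gcongr; exact abs_add_le _ _
          _ = |A - lam * cw| + |B - lam * cu| + |C - lam * cv| + |D| + |E| := by
              rw [abs_neg]
      calc |lam * (cw - cu - cv)| ≤ |A - lam*cw| + |B - lam*cu| + |C - lam*cv| + |D| + |E| := habs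
        _ ≤ 2*ε*lam + 2*ε*lam + 2*ε*lam + ε*lam + ε*lam := by
            gcongr
        _ = 8 * ε * lam := by ring
    have hlb : 10 * ε * lam ≤ |lam * (cw - cu - cv)| := by
      rw [abs_mul, abs_of_pos hlampos]
      calc 10 * ε * lam = lam * (10 * ε) := by ring
        _ ≤ lam * |cw - cu - cv| := mul_le_mul_of_nonneg_left hgap hlampos.le
    nlinarith [mul_pos hε hlampos]


lemma covering (hf : LipschitzWith K f)
    (hD : ∀ x θ : EuclideanSpace ℝ (Fin n), ‖θ‖ = 1 → ∃ d : ℝ,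
      Tendsto (fun lam : ℝ => (f (x + lam • θ) - f x) / lam) (𝓝[>] (0 : ℝ)) (𝓝 d))
    (s : Set (EuclideanSpace ℝ (Fin n))) (hs : Dense s)
    (x : EuclideanSpace ℝ (Fin n)) (hx : ¬ DifferentiableAt ℝ f x) :
    ∃ u ∈ s, ∃ v ∈ s, ∃ cu cv cw ε : ℚ, ∃ m : ℕ,
      x ∈ QSet f u v (cu:ℝ) (cv:ℝ) (cw:ℝ) (ε:ℝ) m := by
  choose φ hφ using exists_dirDeriv hD x
  have hadd : ¬ ∀ u v, φ (u + v) = φ u + φ v := fun h =>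
    hx (diff_of_additive hf x φ hφ h)
  push_neg at hadd
  obtain ⟨u₀, v₀, hne⟩ := hadd
  have hφlip : ∀ a b : EuclideanSpace ℝ (Fin n), |φ a - φ b| ≤ K * ‖a - b‖ := by
    intro a b
    have htend : Tendsto (fun lam => |quotA f x a lam - quotA f x b lam|)
        (𝓝[>] (0:ℝ)) (𝓝 |φ a - φ b|) := ((hφ a).sub (hφ b)).abs
    refine le_of_tendsto htend ?_
    filter_upwards [eventually_mem_nhdsWithin] with lam (hlam : (0:ℝ) < lam)
    exact quot_sub_le hf hlam x a b
  set gap : ℝ := |φ (u₀ + v₀) - φ u₀ - φ v₀| with hgapdef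
  have hgappos : 0 < gap := by
    rw [hgapdef]
    have : φ (u₀ + v₀) - φ u₀ - φ v₀ ≠ 0 := by
      intro h; apply hne; linarith [h]
    exact abs_pos.2 this
  obtain ⟨ε, hε0, hεgap⟩ : ∃ ε : ℚ, (0:ℝ) < ε ∧ (ε:ℝ) < gap / 100 := by
    obtain ⟨q, hq1, hq2⟩ := exists_rat_btwn (by positivity : (0:ℝ) < gap / 100)
    exact ⟨q, hq1, hq2⟩
  set η : ℝ := ε / (2 * ((K:ℝ) + 1)) with hηdef
  have hη0 : 0 < η := by positivity
  obtain ⟨u, hus, huc⟩ : ∃ u ∈ s, dist u₀ u < η :=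
    Metric.mem_closure_iff.1 (hs u₀) η hη0
  obtain ⟨v, hvs, hvc⟩ : ∃ v ∈ s, dist v₀ v < η :=
    Metric.mem_closure_iff.1 (hs v₀) η hη0
  have hKη : (K:ℝ) * η ≤ (ε:ℝ) / 2 := by
    rw [hηdef, ← mul_div_assoc, div_le_div_iff₀ (by positivity) (by norm_num : (0:ℝ) < 2)]
    have : (0:ℝ) ≤ (K:ℝ) := K.coe_nonneg
    nlinarith
  have h1 : |φ u - φ u₀| ≤ (ε:ℝ) / 2 := by
    calc |φ u - φ u₀| ≤ (K:ℝ) * ‖u - u₀‖ := hφlip u u₀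
      _ ≤ (K:ℝ) * η := by
          apply mul_le_mul_of_nonneg_left _ K.coe_nonneg
          rw [← dist_eq_norm, dist_comm]; exact huc.le
      _ ≤ (ε:ℝ) / 2 := hKη
  have h2 : |φ v - φ v₀| ≤ (ε:ℝ) / 2 := by
    calc |φ v - φ v₀| ≤ (K:ℝ) * ‖v - v₀‖ := hφlip v v₀
      _ ≤ (K:ℝ) * η := by
          apply mul_le_mul_of_nonneg_left _ K.coe_nonneg
          rw [← dist_eq_norm, dist_comm]; exact hvc.le
      _ ≤ (ε:ℝ) / 2 := hKη
  have h3 : |φ (u + v) - φ (u₀ + v₀)| ≤ (ε:ℝ) := by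
    calc |φ (u + v) - φ (u₀ + v₀)| ≤ (K:ℝ) * ‖(u + v) - (u₀ + v₀)‖ := hφlip _ _
      _ ≤ (K:ℝ) * (2 * η) := by
          apply mul_le_mul_of_nonneg_left _ K.coe_nonneg
          have : (u + v) - (u₀ + v₀) = (u - u₀) + (v - v₀) := by abel
          rw [this]
          calc ‖(u - u₀) + (v - v₀)‖ ≤ ‖u - u₀‖ + ‖v - v₀‖ := norm_add_le _ _
            _ ≤ η + η := by
                apply add_le_add
                · rw [← dist_eq_norm, dist_comm]; exact huc.le
                · rw [← dist_eq_norm, dist_comm]; exact hvc.le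
            _ = 2 * η := by ring
      _ ≤ (ε:ℝ) := by linarith [hKη]
  have hbig : 98 * (ε:ℝ) ≤ |φ (u + v) - φ u - φ v| := by
    have habs : |φ (u₀ + v₀) - φ u₀ - φ v₀| - |φ (u + v) - φ u - φ v| ≤ 2 * (ε:ℝ) := by
      have : |(φ (u₀ + v₀) - φ u₀ - φ v₀) - (φ (u + v) - φ u - φ v)| ≤ 2 * (ε:ℝ) := by
        have e : (φ (u₀ + v₀) - φ u₀ - φ v₀) - (φ (u + v) - φ u - φ v)
            = -(φ (u + v) - φ (u₀ + v₀)) + (φ u - φ u₀) + (φ v - φ v₀) := by ring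
        rw [e]
        calc |(-(φ (u + v) - φ (u₀ + v₀)) + (φ u - φ u₀) + (φ v - φ v₀))|
            ≤ |(-(φ (u + v) - φ (u₀ + v₀)) + (φ u - φ u₀))| + |φ v - φ v₀| := abs_add_le _ _
          _ ≤ |(-(φ (u + v) - φ (u₀ + v₀)))| + |φ u - φ u₀| + |φ v - φ v₀| := by
              gcongr; exact abs_add_le _ _
          _ = |φ (u + v) - φ (u₀ + v₀)| + |φ u - φ u₀| + |φ v - φ v₀| := by rw [abs_neg]
          _ ≤ (ε:ℝ) + (ε:ℝ)/2 + (ε:ℝ)/2 := by gcongr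
          _ = 2 * (ε:ℝ) := by ring
      linarith [abs_sub_abs_le_abs_sub (φ (u₀ + v₀) - φ u₀ - φ v₀) (φ (u + v) - φ u - φ v), this]
    have : 100 * (ε:ℝ) < gap := by linarith
    linarith
  obtain ⟨cu, hcu⟩ := exists_rat_near (φ u) hε0
  obtain ⟨cv, hcv⟩ := exists_rat_near (φ v) hε0
  obtain ⟨cw, hcw⟩ := exists_rat_near (φ (u + v)) hε0
  have hgap10 : 10 * (ε:ℝ) ≤ |(cw:ℝ) - cu - cv| := by
    have habs : |φ (u + v) - φ u - φ v| - |(cw:ℝ) - cu - cv| ≤ 3 * (ε:ℝ) := by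
      have e : (φ (u + v) - φ u - φ v) - ((cw:ℝ) - cu - cv)
          = (φ (u + v) - cw) - (φ u - cu) - (φ v - cv) := by ring
      have : |(φ (u + v) - φ u - φ v) - ((cw:ℝ) - cu - cv)| ≤ 3 * (ε:ℝ) := by
        rw [e]
        calc |(φ (u + v) - cw) - (φ u - cu) - (φ v - cv)|
            ≤ |(φ (u + v) - cw) - (φ u - cu)| + |φ v - cv| := abs_sub _ _
          _ ≤ |φ (u + v) - cw| + |φ u - cu| + |φ v - cv| := by
              gcongr; exact abs_sub _ _
          _ ≤ (ε:ℝ) + (ε:ℝ) + (ε:ℝ) :=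
              add_le_add (add_le_add hcw.le hcu.le) hcv.le
          _ = 3 * (ε:ℝ) := by ring
      linarith [abs_sub_abs_le_abs_sub (φ (u + v) - φ u - φ v) ((cw:ℝ) - cu - cv), this]
    linarith
  -- find m
  have hev : ∀ᶠ lam in 𝓝[>] (0:ℝ),
      |quotA f x u lam - φ u| < (ε:ℝ) ∧ |quotA f x v lam - φ v| < (ε:ℝ) ∧
      |quotA f x (u + v) lam - φ (u + v)| < (ε:ℝ) := by
    refine (((hφ u).eventually (eventually_abs_sub_lt _ hε0)).and
      (((hφ v).eventually (eventually_abs_sub_lt _ hε0)).and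
      ((hφ (u + v)).eventually (eventually_abs_sub_lt _ hε0))))
  rw [eventually_iff, Metric.mem_nhdsWithin_iff] at hev
  obtain ⟨δ, hδ0, hδ⟩ := hev
  obtain ⟨m₀, hm₀⟩ := exists_nat_one_div_lt hδ0
  refine ⟨u, hus, v, hvs, cu, cv, cw, ε, m₀ + 1, hε0, hgap10, Nat.succ_pos _, ?_⟩
  intro lam hlam0 hlamm
  have hlamδ : lam < δ := by
    have : (1:ℝ) / (m₀ + 1) < δ := by exact_mod_cast hm₀
    calc lam ≤ 1 / ((m₀:ℝ) + 1) := by exact_mod_cast hlamm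
      _ < δ := this
  have hmem : lam ∈ Metric.ball (0:ℝ) δ ∩ Ioi 0 := by
    constructor
    · rw [Metric.mem_ball, Real.dist_eq, sub_zero, abs_of_pos hlam0]; exact hlamδ
    · exact hlam0
  obtain ⟨e1, e2, e3⟩ := hδ hmem
  have key : ∀ (a : EuclideanSpace ℝ (Fin n)) (ca : ℚ),
      |quotA f x a lam - φ a| < (ε:ℝ) → |φ a - (ca:ℝ)| < (ε:ℝ) →
      |f (x + lam • a) - f x - lam * (ca:ℝ)| ≤ 2 * (ε:ℝ) * lam := by
    intro a ca hq hc
    have e : f (x + lam • a) - f x - lam * (ca:ℝ)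
        = lam * ((quotA f x a lam - φ a) + (φ a - (ca:ℝ))) := by
      unfold quotA
      field_simp
      ring
    rw [e, abs_mul, abs_of_pos hlam0]
    have : |(quotA f x a lam - φ a) + (φ a - (ca:ℝ))| ≤ 2 * (ε:ℝ) :=
      (abs_add_le _ _).trans (by linarith)
    calc lam * |(quotA f x a lam - φ a) + (φ a - (ca:ℝ))| ≤ lam * (2 * (ε:ℝ)) :=
          mul_le_mul_of_nonneg_left this hlam0.le
      _ = 2 * (ε:ℝ) * lam := by ring
  exact ⟨key u cu e1 hcu, key v cv e2 hcv, key (u + v) cw e3 hcw⟩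


end NDP

open NDP in
/-- For a Lipschitz, everywhere directionally differentiable `f : ℝⁿ → ℝ`, the set of
points of non-(Fréchet-)differentiability is σ-porous. -/
theorem nondiff_set_sigma_porous
    (n : ℕ) (K : NNReal) (f : EuclideanSpace ℝ (Fin n) → ℝ)
    (hf : LipschitzWith K f)
    (hD : ∀ x θ : EuclideanSpace ℝ (Fin n), ‖θ‖ = 1 → ∃ d : ℝ,
      Tendsto (fun lam : ℝ => (f (x + lam • θ) - f x) / lam) (𝓝[>] (0 : ℝ)) (𝓝 d)) :
    ∃ P : ℕ → Set (EuclideanSpace ℝ (Fin n)),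
      {x | ¬ DifferentiableAt ℝ f x} ⊆ ⋃ i, P i ∧
      ∀ i, ∀ x ∈ P i, ∃ δ : ℝ, 0 < δ ∧ ∀ r : ℝ, 0 < r → r < 1 →
        ∃ y : EuclideanSpace ℝ (Fin n), Metric.ball y (δ * r) ⊆ Metric.ball x r \ P i := by
  obtain ⟨s, hsc, hsd⟩ := TopologicalSpace.exists_countable_dense (EuclideanSpace ℝ (Fin n))
  haveI : Countable ↥s := hsc.to_subtype
  haveI : Nonempty ↥s := hsd.nonempty.to_subtype
  set I := (↥s × ↥s × ℚ × ℚ × ℚ × ℚ × ℕ) with hI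
  obtain ⟨e, he⟩ := exists_surjective_nat I
  set Q : I → Set (EuclideanSpace ℝ (Fin n)) := fun i =>
    QSet f (i.1 : EuclideanSpace ℝ (Fin n)) (i.2.1 : EuclideanSpace ℝ (Fin n))
      (i.2.2.1 : ℝ) (i.2.2.2.1 : ℝ) (i.2.2.2.2.1 : ℝ) (i.2.2.2.2.2.1 : ℝ) i.2.2.2.2.2.2
    with hQ
  refine ⟨fun k => Q (e k), ?_, ?_⟩
  · intro x hx
    obtain ⟨u, hus, v, hvs, cu, cv, cw, ε, m, hmem⟩ := covering hf hD s hsd x hx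
    obtain ⟨k, hk⟩ := he (⟨u, hus⟩, ⟨v, hvs⟩, cu, cv, cw, ε, m)
    exact mem_iUnion.2 ⟨k, by rw [hk]; exact hmem⟩
  · intro k x hxk
    exact QSet_porous hf _ _ _ _ _ _ _ x hxk
end

section
/- Let f, g : ℝⁿ → ℝ be differentiable at every point outside sets E_f, E_g respectively, where E_f and E_g are countable unions of (n-1)-tangential sets. Then max(f,g) is differentiable outside a countable union of (n-1)-tangential sets. -/
/-!
Outside `E_f ∪ E_g` both functions are differentiable. Where `f x ≠ g x`, `max f g` agrees with one
of them near `x`; where `f x = g x` and `f' x = g' x`, it has the common derivative. What remains is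
the transversal crossing set `{f = g, f' ≠ g'}`, which lies in the zero set of `φ = f - g` with
`φ' ≠ 0`. Along such a set `φ'(x) h = o(|h|)`, so increments become asymptotically parallel to the
hyperplane `ker φ'(x)`: the crossing set is itself `(n-1)`-tangential.
-/

open Filter Topology

open Asymptotics RealInnerProductSpace

section Max

variable {E : Type*} [NormedAddCommGroup E] [NormedSpace ℝ E] {f g : E → ℝ} {x : E}

theorem HasFDerivAt.max_of_same {L : E →L[ℝ] ℝ} (hf : HasFDerivAt f L x) (hg : HasFDerivAt g L x) :
    HasFDerivAt (fun z => max (f z) (g z)) L x := by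
  rw [hasFDerivAt_iff_isLittleO_nhds_zero] at hf hg ⊢
  refine (isBigO_of_le _ fun t => ?_).trans_isLittleO (hf.norm_left.add hg.norm_left)
  simp only [Real.norm_eq_abs]
  calc |max (f (x + t)) (g (x + t)) - max (f x) (g x) - L t|
      = |max (f (x + t)) (g (x + t)) - max (f x + L t) (g x + L t)| := by
        rw [max_add_add_right, sub_sub]
    _ ≤ max |f (x + t) - (f x + L t)| |g (x + t) - (g x + L t)| := abs_max_sub_max_le_max ..
    _ ≤ |f (x + t) - f x - L t| + |g (x + t) - g x - L t| := by
        simp only [sub_sub]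
        exact max_le (le_add_of_nonneg_right (abs_nonneg _)) (le_add_of_nonneg_left (abs_nonneg _))
    _ ≤ _ := le_abs_self _

theorem DifferentiableAt.max_of_fderiv_eq (hf : DifferentiableAt ℝ f x)
    (hg : DifferentiableAt ℝ g x) (hfg : f x = g x → fderiv ℝ f x = fderiv ℝ g x) :
    DifferentiableAt ℝ (fun z => max (f z) (g z)) x := by
  rcases lt_trichotomy (f x) (g x) with hlt | heq | hgt
  · refine hg.congr_of_eventuallyEq ?_
    filter_upwards [hf.continuousAt.eventually_lt hg.continuousAt hlt] with z hz
    exact max_eq_right hz.le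
  · exact (hf.hasFDerivAt.max_of_same (hfg heq ▸ hg.hasFDerivAt)).differentiableAt
  · refine hf.congr_of_eventuallyEq ?_
    filter_upwards [hg.continuousAt.eventually_lt hf.continuousAt hgt] with z hz
    exact max_eq_left hz.le

end Max

theorem HasFDerivAt.isLittleO_of_map_eq {E F ι : Type*} [NormedAddCommGroup E] [NormedSpace ℝ E]
    [NormedAddCommGroup F] [NormedSpace ℝ F] {φ : E → F} {L : E →L[ℝ] F} {x : E}
    {l : Filter ι} {h : ι → E} (hφ : HasFDerivAt φ L x) (hh : Tendsto h l (𝓝 0))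
    (hφh : ∀ᶠ j in l, φ (x + h j) = φ x) : (fun j => L (h j)) =o[l] h := by
  have := ((hasFDerivAt_iff_isLittleO_nhds_zero.mp hφ).comp_tendsto hh).neg_left
  refine this.congr' ?_ EventuallyEq.rfl
  filter_upwards [hφh] with j hj
  simp [hj]

namespace Submodule

variable {E : Type*} [NormedAddCommGroup E] [InnerProductSpace ℝ E]

theorem starProjection_orthogonal_orthogonal (K : Submodule ℝ E) [K.HasOrthogonalProjection]
    (u : E) : Kᗮᗮ.starProjection u = K.starProjection u := by
  simp only [starProjection_orthogonal_val, sub_sub_cancel]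

theorem norm_starProjection_span_singleton (v w : E) :
    ‖(ℝ ∙ v).starProjection w‖ = |⟪v, w⟫| / ‖v‖ := by
  rcases eq_or_ne v 0 with rfl | hv
  · simp
  simp only [starProjection_singleton, norm_smul, Real.norm_eq_abs, abs_div,
    RCLike.ofReal_real_eq_id, id, abs_of_nonneg (sq_nonneg ‖v‖)]
  field_simp [norm_ne_zero_iff.mpr hv]

theorem eventually_norm_starProjection_orthogonal_le {ι : Type*} (K : Submodule ℝ E)
    [K.HasOrthogonalProjection] {l : Filter ι} {h : ι → E}
    (ho : (fun j => Kᗮ.starProjection (h j)) =o[l] h) {ε : ℝ} (hε : 0 < ε) :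
    ∀ᶠ j in l, ‖Kᗮ.starProjection (h j)‖ ≤ ε * ‖K.starProjection (h j)‖ := by
  -- `‖p‖ ≤ ε / (1 + ε) * (‖p‖ + ‖q‖)` rearranges to `‖p‖ ≤ ε * ‖q‖`.
  filter_upwards [ho.def (show 0 < ε / (1 + ε) by positivity)] with j hj
  have hsplit : ‖h j‖ ≤ ‖K.starProjection (h j)‖ + ‖Kᗮ.starProjection (h j)‖ := by
    conv_lhs => rw [← K.starProjection_add_starProjection_orthogonal (h j)]
    exact norm_add_le _ _
  have := hj.trans (mul_le_mul_of_nonneg_left hsplit (by positivity))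
  rw [div_mul_eq_mul_div, le_div_iff₀ (by positivity)] at this
  linarith

end Submodule

theorem isTangentialSet_of_hasFDerivAt_ne_zero {n : ℕ} {E : Set (EuclideanSpace ℝ (Fin n))}
    {φ : EuclideanSpace ℝ (Fin n) → ℝ} (hφE : ∀ z ∈ E, φ z = 0)
    (hφ : ∀ x ∈ E, ∃ L : EuclideanSpace ℝ (Fin n) →L[ℝ] ℝ, L ≠ 0 ∧ HasFDerivAt φ L x) :
    IsTangentialSet n (n - 1) E := by
  intro x hx
  obtain ⟨L, hL0, hL⟩ := hφ x hx
  set v := (InnerProductSpace.toDual ℝ (EuclideanSpace ℝ (Fin n))).symm L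
  have hv : v ≠ 0 := by simpa [v] using hL0
  refine ⟨(ℝ ∙ v)ᗮ, ?_, fun h hmem htend ε hε => ?_⟩
  · have := (ℝ ∙ v).finrank_add_finrank_orthogonal
    rw [finrank_euclideanSpace_fin, finrank_span_singleton hv] at this
    omega
  · have hLh : (fun j => L (h j)) =o[atTop] h :=
      hL.isLittleO_of_map_eq htend (Eventually.of_forall fun j => by
        rw [hφE _ (hmem j), hφE _ hx])
    have hnormal : (fun j => (ℝ ∙ v)ᗮᗮ.starProjection (h j)) =o[atTop] h := by
      rw [← isLittleO_norm_left]
      refine (hLh.norm_left.const_mul_left ‖v‖⁻¹).congr_left fun j => ?_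
      rw [inv_mul_eq_div, Submodule.starProjection_orthogonal_orthogonal,
        Submodule.norm_starProjection_span_singleton, InnerProductSpace.toDual_symm_apply,
        Real.norm_eq_abs]
    exact (ℝ ∙ v)ᗮ.eventually_norm_starProjection_orthogonal_le hnormal hε

def transversalCrossingSet {E : Type*} [NormedAddCommGroup E] [NormedSpace ℝ E]
    (f g : E → ℝ) : Set E :=
  {x | DifferentiableAt ℝ f x ∧ DifferentiableAt ℝ g x ∧ f x = g x ∧ fderiv ℝ f x ≠ fderiv ℝ g x}

theorem isTangentialSet_transversalCrossingSet {n : ℕ} (f g : EuclideanSpace ℝ (Fin n) → ℝ) :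
    IsTangentialSet n (n - 1) (transversalCrossingSet f g) :=
  isTangentialSet_of_hasFDerivAt_ne_zero (φ := f - g) (fun _ hz => sub_eq_zero.mpr hz.2.2.1)
    fun _ ⟨hf, hg, _, hne⟩ => ⟨_, sub_ne_zero.mpr hne, hf.hasFDerivAt.sub hg.hasFDerivAt⟩

theorem exists_seq_forall_and_iUnion_eq {X : Type*} {p : Set X → Prop} {S : Set X}
    {A B : ℕ → Set X} (hS : p S) (hA : ∀ i, p (A i)) (hB : ∀ i, p (B i)) :
    ∃ P : ℕ → Set X, (∀ i, p (P i)) ∧ ⋃ i, P i = S ∪ (⋃ i, A i) ∪ ⋃ i, B i := by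
  let F : Option (ℕ ⊕ ℕ) → Set X := fun o => o.elim S (Sum.elim A B)
  let e := (Denumerable.eqv (Option (ℕ ⊕ ℕ))).symm
  refine ⟨fun i => F (e i), fun i => ?_, ?_⟩
  · change p (F (e i))
    rcases e i with _ | i | i
    exacts [hS, hA i, hB i]
  · rw [e.surjective.iUnion_comp F, Set.iUnion_option, Set.iUnion_sum, Set.union_assoc]
    rfl

/-- If `f` and `g` are differentiable outside countable unions of `(n-1)`-tangential
sets, then so is `max (f, g)`. -/
theorem max_differentiable_outside_sigma_tangential
    (n : ℕ) (f g : EuclideanSpace ℝ (Fin n) → ℝ)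
    (Ef Eg : ℕ → Set (EuclideanSpace ℝ (Fin n)))
    (hEf : ∀ i, IsTangentialSet n (n - 1) (Ef i))
    (hEg : ∀ i, IsTangentialSet n (n - 1) (Eg i))
    (hf : ∀ x, x ∉ ⋃ i, Ef i → DifferentiableAt ℝ f x)
    (hg : ∀ x, x ∉ ⋃ i, Eg i → DifferentiableAt ℝ g x) :
    ∃ P : ℕ → Set (EuclideanSpace ℝ (Fin n)),
      (∀ i, IsTangentialSet n (n - 1) (P i)) ∧
      ∀ x, x ∉ ⋃ i, P i → DifferentiableAt ℝ (fun z => max (f z) (g z)) x := by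
  obtain ⟨P, hP, hPunion⟩ :=
    exists_seq_forall_and_iUnion_eq (isTangentialSet_transversalCrossingSet f g) hEf hEg
  refine ⟨P, hP, fun x hx => ?_⟩
  simp only [hPunion, Set.mem_union, not_or] at hx
  obtain ⟨⟨hx_cross, hxf⟩, hxg⟩ := hx
  exact (hf x hxf).max_of_fderiv_eq (hg x hxg) fun hfg =>
    not_not.mp fun hne => hx_cross ⟨hf x hxf, hg x hxg, hfg, hne⟩
end

section
/- Let f : ℝⁿ → ℝ be locally integrable with Mf(x₀) < ∞, where M is the Hardy–Littlewood maximal operator. Suppose h_k → 0 and there exist radii r_k with Mf(x₀+h_k) equal to the average of |f| over B(x₀+h_k, r_k) and r_k → ∞. Then x₀ is a global minimum point of Mf. -/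
open Filter Topology MeasureTheory Metric ENNReal

/-- Average of `|f|` over the ball `B(x, r)`. -/
noncomputable def avgAbs (n : ℕ) (f : EuclideanSpace ℝ (Fin n) → ℝ)
    (x : EuclideanSpace ℝ (Fin n)) (r : ℝ) : ℝ :=
  ⨍ y in ball x r, |f y| ∂volume

/-- The centered Hardy–Littlewood maximal function, with values in `ℝ≥0∞`. -/
noncomputable def maxFn (n : ℕ) (f : EuclideanSpace ℝ (Fin n) → ℝ)
    (x : EuclideanSpace ℝ (Fin n)) : ℝ≥0∞ :=
  ⨆ (r : ℝ) (_ : 0 < r), ENNReal.ofReal (avgAbs n f x r)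

/-!
Enlarging the ball `B(y, r)` to the ball `B(x, r + |x - y|)` costs at most the volume factor
`(1 + |x - y| / r)ⁿ`. Hence the average of `|f|` over `B(x₀, s)` is at most
`(1 + |h_k| / s)ⁿ Mf(x₀ + h_k)` for every `s > 0`, while the best radius gives
`Mf(x₀ + h_k) ≤ (1 + |x₀ + h_k - x| / r_k)ⁿ Mf(x)`. Both factors tend to `1`, the first
because `h_k → 0` and the second because `r_k → ∞`.
-/

lemma ENNReal.le_of_eventually_le_mul_of_tendsto_one {ι : Type*} {l : Filter ι} [l.NeBot]
    {a b : ℝ≥0∞} {u : ι → ℝ≥0∞} (hu : Tendsto u l (𝓝 1)) (hle : ∀ᶠ i in l, a ≤ u i * b) :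
    a ≤ b := by
  rcases eq_or_ne b ⊤ with rfl | hb
  · exact le_top
  simpa using ge_of_tendsto (ENNReal.Tendsto.mul_const hu (Or.inr hb)) hle

lemma tendsto_ofReal_one_add_pow {ι : Type*} {l : Filter ι} {u : ι → ℝ}
    (hu : Tendsto u l (𝓝 0)) (n : ℕ) :
    Tendsto (fun i => ENNReal.ofReal ((1 + u i) ^ n)) l (𝓝 1) := by
  simpa using ENNReal.tendsto_ofReal ((tendsto_const_nhds (x := (1 : ℝ))).add hu |>.pow n)

lemma MeasureTheory.Measure.addHaar_ball_eq_ofReal_div_pow_mul {E : Type*} [NormedAddCommGroup E]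
    [NormedSpace ℝ E] [MeasurableSpace E] [BorelSpace E] [FiniteDimensional ℝ E]
    (μ : Measure E) [μ.IsAddHaarMeasure] (x y : E) {r R : ℝ} (hr : 0 < r) (hR : 0 < R) :
    μ (ball x R) = ENNReal.ofReal ((R / r) ^ Module.finrank ℝ E) * μ (ball y r) := by
  rw [Measure.addHaar_ball_of_pos μ x hR, Measure.addHaar_ball_of_pos μ y hr, ← mul_assoc,
    ← ENNReal.ofReal_mul (by positivity), div_pow,
    div_mul_cancel₀ _ (pow_ne_zero _ hr.ne')]

section MaximalFunction

variable {n : ℕ} {f : EuclideanSpace ℝ (Fin n) → ℝ}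

lemma ofReal_avgAbs_le_maxFn (x : EuclideanSpace ℝ (Fin n)) {r : ℝ} (hr : 0 < r) :
    ENNReal.ofReal (avgAbs n f x r) ≤ maxFn n f x :=
  le_iSup₂ (f := fun s (_ : 0 < s) => ENNReal.ofReal (avgAbs n f x s)) r hr

lemma ofReal_avgAbs (hf : LocallyIntegrable f volume) (x : EuclideanSpace ℝ (Fin n)) {r : ℝ}
    (hr : 0 < r) :
    ENNReal.ofReal (avgAbs n f x r)
      = (∫⁻ y in ball x r, ENNReal.ofReal |f y|) / volume (ball x r) := by
  have hint : IntegrableOn (fun y => |f y|) (ball x r) volume :=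
    ((hf.integrableOn_isCompact (isCompact_closedBall x r)).mono_set
      ball_subset_closedBall).abs
  have h0 : volume (ball x r) ≠ 0 := (measure_ball_pos volume x hr).ne'
  have htop : volume (ball x r) ≠ ⊤ := measure_ball_lt_top.ne
  rw [avgAbs, setAverage_eq, smul_eq_mul, measureReal_def,
    ENNReal.ofReal_mul (inv_nonneg.2 ENNReal.toReal_nonneg),
    ofReal_integral_eq_lintegral_ofReal hint (ae_of_all _ fun y => abs_nonneg _),
    ENNReal.ofReal_inv_of_pos (ENNReal.toReal_pos h0 htop), ENNReal.ofReal_toReal htop,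
    ENNReal.div_eq_inv_mul]

lemma ofReal_avgAbs_le_mul_maxFn (hf : LocallyIntegrable f volume)
    {x y : EuclideanSpace ℝ (Fin n)} {r d : ℝ} (hr : 0 < r) (hd : dist y x ≤ d) :
    ENNReal.ofReal (avgAbs n f y r) ≤ ENNReal.ofReal ((1 + d / r) ^ n) * maxFn n f x := by
  have hR : 0 < r + d := by linarith [dist_nonneg.trans hd]
  have hsub : ball y r ⊆ ball x (r + d) := ball_subset_ball' (by linarith)
  have hvol : volume (ball x (r + d)) = ENNReal.ofReal ((1 + d / r) ^ n) * volume (ball y r) := by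
    rw [Measure.addHaar_ball_eq_ofReal_div_pow_mul volume x y hr hR, finrank_euclideanSpace_fin,
      add_div, div_self hr.ne']
  rw [ofReal_avgAbs hf y hr,
    ENNReal.div_le_iff (measure_ball_pos volume y hr).ne' measure_ball_lt_top.ne]
  calc ∫⁻ z in ball y r, ENNReal.ofReal |f z|
      ≤ ∫⁻ z in ball x (r + d), ENNReal.ofReal |f z| := lintegral_mono_set hsub
    _ ≤ maxFn n f x * volume (ball x (r + d)) := by
      rw [← ENNReal.div_le_iff (measure_ball_pos volume x hR).ne' measure_ball_lt_top.ne,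
        ← ofReal_avgAbs hf x hR]
      exact ofReal_avgAbs_le_maxFn x hR
    _ = ENNReal.ofReal ((1 + d / r) ^ n) * maxFn n f x * volume (ball y r) := by
      rw [hvol]; ring

end MaximalFunction

theorem global_min_of_best_radii_tendsto_infty_general
    (n : ℕ) (f : EuclideanSpace ℝ (Fin n) → ℝ) (hf : LocallyIntegrable f volume)
    (x₀ : EuclideanSpace ℝ (Fin n))
    (h : ℕ → EuclideanSpace ℝ (Fin n)) (r : ℕ → ℝ) (hr0 : ∀ k, 0 < r k)
    (hbest : ∀ k, maxFn n f (x₀ + h k) = ENNReal.ofReal (avgAbs n f (x₀ + h k) (r k)))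
    (hh : Tendsto h atTop (𝓝 0)) (hrinf : Tendsto r atTop atTop) :
    ∀ x, maxFn n f x₀ ≤ maxFn n f x := by
  intro x
  refine iSup₂_le fun s hs => ?_
  have hshift : Tendsto (fun k => ‖h k‖ / s) atTop (𝓝 0) := by
    simpa using hh.norm.div_const s
  have hdist : Tendsto (fun k => dist (x₀ + h k) x) atTop (𝓝 (dist x₀ x)) := by
    simpa using (tendsto_const_nhds.add hh).dist tendsto_const_nhds
  have hfactor : Tendsto (fun k => ENNReal.ofReal ((1 + ‖h k‖ / s) ^ n)
      * ENNReal.ofReal ((1 + dist (x₀ + h k) x / r k) ^ n)) atTop (𝓝 1) := by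
    simpa using ENNReal.Tendsto.mul (tendsto_ofReal_one_add_pow hshift n) (Or.inl one_ne_zero)
      (tendsto_ofReal_one_add_pow (hdist.div_atTop hrinf) n) (Or.inr one_ne_top)
  refine ENNReal.le_of_eventually_le_mul_of_tendsto_one hfactor
    (Eventually.of_forall fun k => ?_)
  calc ENNReal.ofReal (avgAbs n f x₀ s)
      ≤ ENNReal.ofReal ((1 + ‖h k‖ / s) ^ n) * maxFn n f (x₀ + h k) :=
        ofReal_avgAbs_le_mul_maxFn hf hs (by simp)
    _ ≤ ENNReal.ofReal ((1 + ‖h k‖ / s) ^ n)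
          * (ENNReal.ofReal ((1 + dist (x₀ + h k) x / r k) ^ n) * maxFn n f x) := by
        gcongr
        rw [hbest k]
        exact ofReal_avgAbs_le_mul_maxFn hf (hr0 k) le_rfl
    _ = _ := (mul_assoc _ _ _).symm

/-- If `Mf(x₀) < ∞` and there are points `x₀ + h k → x₀` whose best radii `r k` tend to
infinity, then `x₀` is a global minimum point of `Mf`. -/
theorem global_min_of_best_radii_tendsto_infty
    (n : ℕ) (f : EuclideanSpace ℝ (Fin n) → ℝ) (hf : LocallyIntegrable f volume)
    (x₀ : EuclideanSpace ℝ (Fin n)) (hfin : maxFn n f x₀ < ⊤)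
    (h : ℕ → EuclideanSpace ℝ (Fin n)) (r : ℕ → ℝ) (hr0 : ∀ k, 0 < r k)
    (hbest : ∀ k, maxFn n f (x₀ + h k) = ENNReal.ofReal (avgAbs n f (x₀ + h k) (r k)))
    (hh : Tendsto h atTop (𝓝 0)) (hrinf : Tendsto r atTop atTop) :
    ∀ x, maxFn n f x₀ ≤ maxFn n f x :=
  global_min_of_best_radii_tendsto_infty_general n f hf x₀ h r hr0 hbest hh hrinf
end

section
/- Under the assumptions of the previous statement (Mf(x₀) < ∞, h_k → 0, r_k ∈ best radii at x₀+h_k with r_k → ∞), one has (Mf(x₀+h_k) − Mf(x₀))/|h_k| → 0 as k → ∞. -/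
open Filter Topology MeasureTheory Metric ENNReal

/-!
Write `A = Mf(x₀)`, `a_k = Mf(x₀ + h_k)` and `d = |x − y|`. The inclusion
`B(x, s) ⊆ B(y, s + d)` gives `(s / (s + d))ⁿ · avg(x, s) ≤ Mf(y)`.

Lower bound: chaining this inclusion through the best balls `B(x₀ + h_k, r_k)` shows that
averages of `|f|` over arbitrarily large balls centred at `x₀` come arbitrarily close to `A`;
letting the radius tend to infinity then gives `A ≤ Mf(y)` for every `y`, so `a_k ≥ A`.

Upper bound: `B(x₀ + h_k, r_k) ⊆ B(x₀, r_k + |h_k|)` gives `(r_k / (r_k + |h_k|))ⁿ a_k ≤ A`,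
hence `a_k → A`, and Bernoulli's inequality turns it into
`(a_k − A) / |h_k| ≤ n a_k / r_k → 0`.
-/

open Module

theorem div_pow_finrank_mul_setAverage_ball_le {E : Type*} [NormedAddCommGroup E]
    [NormedSpace ℝ E] [MeasurableSpace E] [BorelSpace E] [FiniteDimensional ℝ E]
    (μ : Measure E) [μ.IsAddHaarMeasure] {g : E → ℝ} {x y : E} {s t : ℝ}
    (hg : IntegrableOn g (ball y t) μ) (hg0 : 0 ≤ g) (hs : 0 < s) (hst : ball x s ⊆ ball y t) :
    (s / t) ^ finrank ℝ E * ⨍ z in ball x s, g z ∂μ ≤ ⨍ z in ball y t, g z ∂μ := by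
  have ht : 0 < t := dist_nonneg.trans_lt (mem_ball.1 (hst (mem_ball_self hs)))
  set c := μ.real (ball (0 : E) 1)
  have hc : 0 < c := ENNReal.toReal_pos (measure_ball_pos μ _ one_pos).ne' measure_ball_lt_top.ne
  have hvol : ∀ (z : E) {u : ℝ}, 0 < u → μ.real (ball z u) = u ^ finrank ℝ E * c := fun z u hu => by
    rw [measureReal_def, Measure.addHaar_ball_of_pos μ z hu, ENNReal.toReal_mul,
      ENNReal.toReal_ofReal (by positivity)]
    rfl
  have hmono : ∫ z in ball x s, g z ∂μ ≤ ∫ z in ball y t, g z ∂μ :=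
    setIntegral_mono_set hg (Eventually.of_forall hg0) hst.eventuallyLE
  rw [setAverage_eq, setAverage_eq, smul_eq_mul, smul_eq_mul, hvol x hs, hvol y ht]
  calc (s / t) ^ finrank ℝ E * ((s ^ finrank ℝ E * c)⁻¹ * ∫ z in ball x s, g z ∂μ)
      = (t ^ finrank ℝ E * c)⁻¹ * ∫ z in ball x s, g z ∂μ := by
        rw [div_pow]; field_simp
    _ ≤ (t ^ finrank ℝ E * c)⁻¹ * ∫ z in ball y t, g z ∂μ := by gcongr

theorem tendsto_div_add_nhds_one {α : Type*} {l : Filter α} {s u : α → ℝ}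
    (hs : ∀ᶠ k in l, s k ≠ 0) (hu : Tendsto (fun k => u k / s k) l (𝓝 0)) :
    Tendsto (fun k => s k / (s k + u k)) l (𝓝 1) := by
  have h : Tendsto (fun k => (1 + u k / s k)⁻¹) l (𝓝 1) := by
    simpa using (hu.const_add 1).inv₀ (by norm_num)
  refine h.congr' ?_
  filter_upwards [hs] with k hk
  rw [one_add_div hk, inv_div]

theorem sub_div_le_of_div_add_pow_mul_le {n : ℕ} {r u a b : ℝ} (hr : 0 < r) (hu : 0 ≤ u)
    (ha : 0 ≤ a) (h : (r / (r + u)) ^ n * a ≤ b) : (a - b) / u ≤ n * a / r := by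
  rcases hu.eq_or_lt with rfl | hu
  · rw [_root_.div_zero]; positivity
  have hbern : 1 + n * (r / (r + u) - 1) ≤ (r / (r + u)) ^ n :=
    one_add_mul_sub_le_pow (neg_one_lt_zero.trans_le (by positivity)).le n
  have hsub : r / (r + u) - 1 = -(u / (r + u)) := by field_simp; ring
  have hfrac : u / (r + u) ≤ u / r := div_le_div_of_nonneg_left hu.le hr (by linarith)
  rw [hsub] at hbern
  have key : a - b ≤ n * a * (u / r) := by
    nlinarith [mul_le_mul_of_nonneg_right hbern ha,
      mul_le_mul_of_nonneg_left hfrac (mul_nonneg (Nat.cast_nonneg n) ha)]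
  rw [div_le_iff₀ hu]
  linarith [show n * a * (u / r) = n * a / r * u by ring]

section MaximalFunction

variable {n : ℕ} {f : EuclideanSpace ℝ (Fin n) → ℝ} {x y : EuclideanSpace ℝ (Fin n)}

theorem avgAbs_nonneg (s : ℝ) : 0 ≤ avgAbs n f x s :=
  integral_nonneg fun _ => abs_nonneg _

theorem avgAbs_le_toReal_maxFn (hx : maxFn n f x ≠ ⊤) {s : ℝ} (hs : 0 < s) :
    avgAbs n f x s ≤ (maxFn n f x).toReal :=
  (ofReal_le_iff_le_toReal hx).1 <|
    le_iSup₂ (f := fun r (_ : 0 < r) => ENNReal.ofReal (avgAbs n f x r)) s hs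

theorem exists_lt_avgAbs {c : ℝ} (hc : c < (maxFn n f x).toReal) :
    ∃ s, 0 < s ∧ c < avgAbs n f x s := by
  by_contra! hle
  have hc0 : 0 ≤ c := (avgAbs_nonneg 1).trans (hle 1 one_pos)
  have hmax : maxFn n f x ≤ ENNReal.ofReal c :=
    iSup₂_le fun s hs => ENNReal.ofReal_le_ofReal (hle s hs)
  exact (toReal_le_of_le_ofReal hc0 hmax).not_gt hc

theorem div_pow_mul_avgAbs_le_avgAbs (hf : LocallyIntegrable f volume) {s t : ℝ} (hs : 0 < s)
    (hst : s + dist x y ≤ t) : (s / t) ^ n * avgAbs n f x s ≤ avgAbs n f y t := by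
  simpa only [avgAbs, finrank_euclideanSpace_fin] using
    div_pow_finrank_mul_setAverage_ball_le volume
      ((hf.integrableOn_isCompact (isCompact_closedBall y t)).mono_set ball_subset_closedBall).abs
      (fun _ => abs_nonneg _) hs (ball_subset_ball' hst)

theorem div_pow_mul_avgAbs_le_toReal_maxFn (hf : LocallyIntegrable f volume)
    (hy : maxFn n f y ≠ ⊤) {s : ℝ} (hs : 0 < s) :
    (s / (s + dist x y)) ^ n * avgAbs n f x s ≤ (maxFn n f y).toReal :=
  (div_pow_mul_avgAbs_le_avgAbs hf hs le_rfl).trans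
    (avgAbs_le_toReal_maxFn hy (by positivity))

theorem div_pow_mul_toReal_maxFn_le_of_eq_avgAbs (hf : LocallyIntegrable f volume)
    (hx : maxFn n f x ≠ ⊤) {r : ℝ} (hr : 0 < r)
    (hbest : maxFn n f y = ENNReal.ofReal (avgAbs n f y r)) :
    (r / (r + dist y x)) ^ n * (maxFn n f y).toReal ≤ (maxFn n f x).toReal := by
  rw [hbest, toReal_ofReal (avgAbs_nonneg r)]
  exact div_pow_mul_avgAbs_le_toReal_maxFn hf hx hr

theorem le_toReal_maxFn_of_frequently_lt_avgAbs (hf : LocallyIntegrable f volume)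
    (hy : maxFn n f y ≠ ⊤) {c : ℝ} (hc : ∃ᶠ s in atTop, c < avgAbs n f x s) :
    c ≤ (maxFn n f y).toReal := by
  have hratio : Tendsto (fun s => (s / (s + dist x y)) ^ n * c) atTop (𝓝 c) := by
    simpa using ((tendsto_div_add_nhds_one (eventually_ne_atTop 0)
      (tendsto_const_nhds.div_atTop tendsto_id)).pow n).mul_const c
  refine le_of_tendsto_of_frequently hratio ((hc.and_eventually (eventually_gt_atTop 0)).mono ?_)
  rintro s ⟨hcs, hs⟩
  calc (s / (s + dist x y)) ^ n * c ≤ (s / (s + dist x y)) ^ n * avgAbs n f x s := by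
        gcongr
    _ ≤ (maxFn n f y).toReal := div_pow_mul_avgAbs_le_toReal_maxFn hf hy hs

section BestRadii

variable {x₀ : EuclideanSpace ℝ (Fin n)} {h : ℕ → EuclideanSpace ℝ (Fin n)} {r : ℕ → ℝ}

theorem frequently_lt_avgAbs_of_best_radii (hf : LocallyIntegrable f volume)
    (hbest : ∀ k, maxFn n f (x₀ + h k) = ENNReal.ofReal (avgAbs n f (x₀ + h k) (r k)))
    (hh : Tendsto h atTop (𝓝 0)) (hrinf : Tendsto r atTop atTop) {c : ℝ}
    (hc : c < (maxFn n f x₀).toReal) : ∃ᶠ s in atTop, c < avgAbs n f x₀ s := by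
  obtain ⟨s₀, hs₀, hcs₀⟩ := exists_lt_avgAbs hc
  have hnorm : Tendsto (fun k => ‖h k‖) atTop (𝓝 0) := by simpa using hh.norm
  have hbound : ∀ᶠ k in atTop, (r k / (r k + ‖h k‖)) ^ n * ((s₀ / (s₀ + ‖h k‖)) ^ n *
      avgAbs n f x₀ s₀) ≤ avgAbs n f x₀ (r k + ‖h k‖) := by
    filter_upwards [hrinf.eventually_gt_atTop 0] with k hk
    have hne : maxFn n f (x₀ + h k) ≠ ⊤ := by rw [hbest k]; exact ofReal_ne_top
    have hs₀k : (s₀ / (s₀ + ‖h k‖)) ^ n * avgAbs n f x₀ s₀ ≤ (maxFn n f (x₀ + h k)).toReal := by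
      simpa only [dist_self_add_right] using div_pow_mul_avgAbs_le_toReal_maxFn (x := x₀) hf hne hs₀
    calc _ ≤ (r k / (r k + ‖h k‖)) ^ n * (maxFn n f (x₀ + h k)).toReal :=
          mul_le_mul_of_nonneg_left hs₀k (by positivity)
      _ = (r k / (r k + ‖h k‖)) ^ n * avgAbs n f (x₀ + h k) (r k) := by
          rw [hbest k, toReal_ofReal (avgAbs_nonneg _)]
      _ ≤ avgAbs n f x₀ (r k + ‖h k‖) :=
          div_pow_mul_avgAbs_le_avgAbs hf hk (dist_self_add_left (h k) x₀ ▸ le_rfl)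
  have hlim : Tendsto (fun k => (r k / (r k + ‖h k‖)) ^ n * ((s₀ / (s₀ + ‖h k‖)) ^ n *
      avgAbs n f x₀ s₀)) atTop (𝓝 (avgAbs n f x₀ s₀)) := by
    have hr1 := tendsto_div_add_nhds_one (hrinf.eventually_ne_atTop 0) (hnorm.div_atTop hrinf)
    have hs1 := tendsto_div_add_nhds_one (Eventually.of_forall fun _ => hs₀.ne')
      (by simpa using hnorm.div_const s₀)
    simpa using (hr1.pow n).mul ((hs1.pow n).mul_const (avgAbs n f x₀ s₀))
  have hgrow : Tendsto (fun k => r k + ‖h k‖) atTop atTop :=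
    tendsto_atTop_add_right_of_le _ 0 hrinf fun k => norm_nonneg _
  have hlarge : ∀ᶠ k in atTop, c < avgAbs n f x₀ (r k + ‖h k‖) :=
    ((hlim.eventually (lt_mem_nhds hcs₀)).and hbound).mono fun _ hk => hk.1.trans_le hk.2
  exact hgrow.frequently hlarge.frequently

theorem toReal_maxFn_le_of_best_radii (hf : LocallyIntegrable f volume)
    (hbest : ∀ k, maxFn n f (x₀ + h k) = ENNReal.ofReal (avgAbs n f (x₀ + h k) (r k)))
    (hh : Tendsto h atTop (𝓝 0)) (hrinf : Tendsto r atTop atTop) (hy : maxFn n f y ≠ ⊤) :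
    (maxFn n f x₀).toReal ≤ (maxFn n f y).toReal :=
  le_of_forall_lt_imp_le_of_dense fun _ hc =>
    le_toReal_maxFn_of_frequently_lt_avgAbs hf hy
      (frequently_lt_avgAbs_of_best_radii hf hbest hh hrinf hc)

theorem eventually_div_pow_mul_toReal_maxFn_le_of_best_radii (hf : LocallyIntegrable f volume)
    (hfin : maxFn n f x₀ ≠ ⊤)
    (hbest : ∀ k, maxFn n f (x₀ + h k) = ENNReal.ofReal (avgAbs n f (x₀ + h k) (r k)))
    (hrinf : Tendsto r atTop atTop) :
    ∀ᶠ k in atTop, 0 < r k ∧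
      (r k / (r k + ‖h k‖)) ^ n * (maxFn n f (x₀ + h k)).toReal ≤ (maxFn n f x₀).toReal := by
  filter_upwards [hrinf.eventually_gt_atTop 0] with k hk
  simpa only [dist_self_add_left, hk, true_and] using
    div_pow_mul_toReal_maxFn_le_of_eq_avgAbs hf hfin hk (hbest k)

theorem tendsto_toReal_maxFn_of_best_radii (hf : LocallyIntegrable f volume)
    (hfin : maxFn n f x₀ ≠ ⊤)
    (hbest : ∀ k, maxFn n f (x₀ + h k) = ENNReal.ofReal (avgAbs n f (x₀ + h k) (r k)))
    (hh : Tendsto h atTop (𝓝 0)) (hrinf : Tendsto r atTop atTop) :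
    Tendsto (fun k => (maxFn n f (x₀ + h k)).toReal) atTop (𝓝 (maxFn n f x₀).toReal) := by
  have hnorm : Tendsto (fun k => ‖h k‖) atTop (𝓝 0) := by simpa using hh.norm
  have hratio : Tendsto (fun k => r k / (r k + ‖h k‖)) atTop (𝓝 1) :=
    tendsto_div_add_nhds_one (hrinf.eventually_ne_atTop 0) (hnorm.div_atTop hrinf)
  have hupper : Tendsto (fun k => (maxFn n f x₀).toReal / (r k / (r k + ‖h k‖)) ^ n) atTop
      (𝓝 (maxFn n f x₀).toReal) := by
    simpa [div_eq_mul_inv] using ((hratio.pow n).inv₀ (by simp)).const_mul (maxFn n f x₀).toReal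
  refine tendsto_of_tendsto_of_tendsto_of_le_of_le' tendsto_const_nhds hupper
    (Eventually.of_forall fun k => toReal_maxFn_le_of_best_radii hf hbest hh hrinf ?_) ?_
  · rw [hbest k]; exact ofReal_ne_top
  filter_upwards [eventually_div_pow_mul_toReal_maxFn_le_of_best_radii hf hfin hbest hrinf]
    with k ⟨hk, hle⟩
  rw [le_div_iff₀ (by positivity), mul_comm]
  exact hle

end BestRadii

end MaximalFunction

theorem difference_quotient_tendsto_zero_of_best_radii_tendsto_infty_general
    (n : ℕ) (f : EuclideanSpace ℝ (Fin n) → ℝ) (hf : LocallyIntegrable f volume)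
    (x₀ : EuclideanSpace ℝ (Fin n)) (hfin : maxFn n f x₀ < ⊤)
    (h : ℕ → EuclideanSpace ℝ (Fin n)) (r : ℕ → ℝ)
    (hbest : ∀ k, maxFn n f (x₀ + h k) = ENNReal.ofReal (avgAbs n f (x₀ + h k) (r k)))
    (hh : Tendsto h atTop (𝓝 0)) (hrinf : Tendsto r atTop atTop) :
    Tendsto (fun k => ((maxFn n f (x₀ + h k)).toReal - (maxFn n f x₀).toReal) / ‖h k‖)
      atTop (𝓝 0) := by
  have hne : ∀ k, maxFn n f (x₀ + h k) ≠ ⊤ := fun k => by rw [hbest k]; exact ofReal_ne_top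
  have hlower : ∀ k, (maxFn n f x₀).toReal ≤ (maxFn n f (x₀ + h k)).toReal := fun k =>
    toReal_maxFn_le_of_best_radii hf hbest hh hrinf (hne k)
  have hbound : Tendsto (fun k => n * (maxFn n f (x₀ + h k)).toReal / r k) atTop (𝓝 0) :=
    ((tendsto_toReal_maxFn_of_best_radii hf hfin.ne hbest hh hrinf).const_mul _).div_atTop hrinf
  refine tendsto_of_tendsto_of_tendsto_of_le_of_le' tendsto_const_nhds hbound
    (Eventually.of_forall fun k => div_nonneg (sub_nonneg.2 (hlower k)) (norm_nonneg _)) ?_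
  filter_upwards [eventually_div_pow_mul_toReal_maxFn_le_of_best_radii hf hfin.ne hbest hrinf]
    with k ⟨hk, hle⟩
  exact sub_div_le_of_div_add_pow_mul_le hk (norm_nonneg _) toReal_nonneg hle

/-- Under the assumptions of Lemma 3.2 (`Mf(x₀) < ∞`, `h k → 0`, best radii
`r k → ∞`), the difference quotients `(Mf(x₀+h k) − Mf(x₀))/|h k|` tend to `0`. -/
theorem difference_quotient_tendsto_zero_of_best_radii_tendsto_infty
    (n : ℕ) (f : EuclideanSpace ℝ (Fin n) → ℝ) (hf : LocallyIntegrable f volume)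
    (x₀ : EuclideanSpace ℝ (Fin n)) (hfin : maxFn n f x₀ < ⊤)
    (h : ℕ → EuclideanSpace ℝ (Fin n)) (r : ℕ → ℝ) (hr0 : ∀ k, 0 < r k)
    (hbest : ∀ k, maxFn n f (x₀ + h k) = ENNReal.ofReal (avgAbs n f (x₀ + h k) (r k)))
    (hh : Tendsto h atTop (𝓝 0)) (hrinf : Tendsto r atTop atTop) :
    Tendsto (fun k => ((maxFn n f (x₀ + h k)).toReal - (maxFn n f x₀).toReal) / ‖h k‖)
      atTop (𝓝 0) :=
  difference_quotient_tendsto_zero_of_best_radii_tendsto_infty_general n f hf x₀ hfin h r hbest hh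
    hrinf
end

section
/- Let f : ℝⁿ → ℝ be locally integrable, x ∈ ℝⁿ, D ∈ ℝⁿ, and u : ℝⁿ → ℝ satisfy f(y) = f(x) + D·(y−x) + |y−x| u(y−x) for all y. Then for all h ∈ ℝⁿ and r > 0, |f_r(x+h) − f_r(x) − D·h| ≤ C_n |h| sup_{|a| ≤ r + |h|} |u(a)|, where C_n depends only on n and f_r(z) denotes the average of f over B(z,r). -/
open MeasureTheory Metric Set Module
open scoped RealInnerProductSpace

/-! Write `f = f x + ⟪D, · - x⟫ + g`, so that `|g| ≤ (r + |h|) M` on both balls. The average of an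
affine map over a ball is its value at the centre, since its linear part is odd about the centre;
hence the left side is the difference of the averages of `g` over the two balls. That difference
only sees the symmetric difference of the balls, whose measure is `O(|h| / r)` times the volume of
a ball, because the ball of radius `r - |h| / 2` about the midpoint of the centres lies in both. -/

theorem mul_pow_sub_pow_le {R : Type*} [CommRing R] [LinearOrder R] [IsStrictOrderedRing R]
    {r s : R} (d : ℕ) (hs : 0 ≤ s) (hsr : s ≤ r) :
    r * (r ^ d - s ^ d) ≤ d * r ^ d * (r - s) := by
  cases d with
  | zero => simp
  | succ k =>
    have h := (le_abs_self _).trans (abs_pow_sub_pow_le r s (k + 1))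
    rw [abs_of_nonneg (sub_nonneg.2 hsr), max_eq_left (abs_le_abs_of_nonneg hs hsr),
      abs_of_nonneg (hs.trans hsr), Nat.add_sub_cancel] at h
    calc r * (r ^ (k + 1) - s ^ (k + 1)) ≤ r * ((r - s) * (k + 1 : ℕ) * r ^ k) :=
          mul_le_mul_of_nonneg_left h (hs.trans hsr)
      _ = (k + 1 : ℕ) * r ^ (k + 1) * (r - s) := by ring

theorem norm_setIntegral_sub_setIntegral_le {α F : Type*} [MeasurableSpace α] {μ : Measure α}
    [NormedAddCommGroup F] [NormedSpace ℝ F] {g : α → F} {s t : Set α} {K : ℝ}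
    (hs : MeasurableSet s) (ht : MeasurableSet t) (hμs : μ s ≠ ⊤) (hμt : μ t ≠ ⊤)
    (hgs : IntegrableOn g s μ) (hgt : IntegrableOn g t μ) (hK : ∀ y ∈ s ∪ t, ‖g y‖ ≤ K) :
    ‖∫ y in s, g y ∂μ - ∫ y in t, g y ∂μ‖ ≤ K * (μ.real (s \ t) + μ.real (t \ s)) := by
  have hsplit : ∫ y in s, g y ∂μ - ∫ y in t, g y ∂μ
      = ∫ y in s \ t, g y ∂μ - ∫ y in t \ s, g y ∂μ := by
    rw [← integral_inter_add_sdiff ht hgs, ← integral_inter_add_sdiff hs hgt, inter_comm]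
    abel
  have hbound : ∀ {a b : Set α}, μ a ≠ ⊤ → a ⊆ s ∪ t →
      ‖∫ y in a \ b, g y ∂μ‖ ≤ K * μ.real (a \ b) :=
    fun ha hab ↦ norm_setIntegral_le_of_norm_le_const
      ((measure_mono sdiff_subset).trans_lt ha.lt_top) fun y hy ↦ hK y (hab hy.1)
  rw [hsplit, mul_add]
  exact (norm_sub_le _ _).trans
    (add_le_add (hbound hμs subset_union_left) (hbound hμt subset_union_right))

theorem MeasureTheory.LocallyIntegrable.integrableOn_ball {X F : Type*} [PseudoMetricSpace X]
    [ProperSpace X] [MeasurableSpace X] {μ : Measure X} [NormedAddCommGroup F] {g : X → F}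
    (hg : LocallyIntegrable g μ) (z : X) (r : ℝ) : IntegrableOn g (ball z r) μ :=
  (hg.integrableOn_isCompact (isCompact_closedBall z r)).mono_set ball_subset_closedBall

variable {E F : Type*} [NormedAddCommGroup E] [NormedSpace ℝ E] [FiniteDimensional ℝ E]
  [MeasurableSpace E] [BorelSpace E] (μ : Measure E) [μ.IsAddHaarMeasure]
  [NormedAddCommGroup F] [NormedSpace ℝ F]

theorem setIntegral_ball_odd_eq_zero {φ : E → F} (hφ : ∀ v, φ (-v) = -φ v) (z : E) (r : ℝ) :
    ∫ y in ball z r, φ (y - z) ∂μ = 0 := by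
  have : IsAddTorsionFree F := .of_isTorsionFree ℝ F
  rw [← integral_indicator measurableSet_ball, ← self_eq_neg, ← integral_neg]
  have hodd : ∀ y, (ball z r).indicator (fun y ↦ φ (y - z)) (z + z - y) =
      -(ball z r).indicator (fun y ↦ φ (y - z)) y := by
    intro y
    have hmem : z + z - y ∈ ball z r ↔ y ∈ ball z r := by
      simp only [mem_ball, dist_eq_norm, ← norm_neg (y - z)]
      congr! 2; abel
    by_cases hy : y ∈ ball z r
    · rw [indicator_of_mem (hmem.2 hy), indicator_of_mem hy, ← hφ]
      congr 1; abel
    · rw [indicator_of_notMem (mt hmem.1 hy), indicator_of_notMem hy, neg_zero]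
  simp_rw [← hodd]
  exact (integral_sub_left_eq_self _ μ (z + z)).symm

theorem addHaar_real_ball_of_pos (x : E) {r : ℝ} (hr : 0 < r) :
    μ.real (ball x r) = r ^ finrank ℝ E * μ.real (ball 0 1) := by
  rw [measureReal_def, Measure.addHaar_ball_of_pos μ x hr, ENNReal.toReal_mul,
    ENNReal.toReal_ofReal (by positivity), measureReal_def]

theorem addHaar_real_ball_sdiff_ball_le {x y : E} {r : ℝ} (hr : 0 < r) :
    (r + dist x y) * μ.real (ball x r \ ball y r)
      ≤ 3 / 2 * (finrank ℝ E + 1) * dist x y * μ.real (ball y r) := by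
  set δ := dist x y
  set d := finrank ℝ E
  have hδ : 0 ≤ δ := dist_nonneg
  rcases le_or_gt (2 * r) δ with hfar | hnear
  · have hdiff : μ.real (ball x r \ ball y r) ≤ μ.real (ball y r) :=
      Measure.addHaar_real_ball_center μ y r ▸ Measure.addHaar_real_ball_center μ x r ▸
        measureReal_mono sdiff_subset measure_ball_lt_top.ne
    calc (r + δ) * μ.real (ball x r \ ball y r) ≤ (3 / 2 * δ) * μ.real (ball y r) :=
          mul_le_mul (by linarith) hdiff measureReal_nonneg (by positivity)
      _ ≤ _ := by gcongr; linarith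
  · set s := r - δ / 2
    set m := midpoint ℝ x y
    have hs : 0 < s := by simp only [s]; linarith
    have hsr : s ≤ r := by simp only [s]; linarith
    have hmx : ball m s ⊆ ball x r :=
      ball_subset_ball' (le_of_eq (by rw [dist_midpoint_left]; simp [s, δ]; ring))
    have hmy : ball m s ⊆ ball y r :=
      ball_subset_ball' (le_of_eq (by rw [dist_midpoint_right]; simp [s, δ]; ring))
    have hdiff : μ.real (ball x r \ ball y r) ≤ (r ^ d - s ^ d) * μ.real (ball 0 1) := by
      calc μ.real (ball x r \ ball y r) ≤ μ.real (ball x r \ ball m s) :=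
            measureReal_mono (sdiff_subset_sdiff_right hmy)
              ((measure_mono sdiff_subset).trans_lt measure_ball_lt_top).ne
        _ = _ := by
          rw [measureReal_sdiff hmx measurableSet_ball measure_ball_lt_top.ne,
            addHaar_real_ball_of_pos μ x hr, addHaar_real_ball_of_pos μ m hs]
          ring
    calc (r + δ) * μ.real (ball x r \ ball y r)
        ≤ (3 * r) * ((r ^ d - s ^ d) * μ.real (ball 0 1)) :=
          mul_le_mul (by linarith) hdiff measureReal_nonneg (by positivity)
      _ = 3 * (r * (r ^ d - s ^ d)) * μ.real (ball 0 1) := by ring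
      _ ≤ 3 * (d * r ^ d * (r - s)) * μ.real (ball 0 1) := by
          gcongr 3 * ?_ * _; exact mul_pow_sub_pow_le d hs.le hsr
      _ = 3 / 2 * d * δ * μ.real (ball y r) := by
          rw [addHaar_real_ball_of_pos μ y hr]; simp only [s]; ring
      _ ≤ _ := by gcongr; linarith

theorem setIntegral_ball_clm_sub [CompleteSpace F] (L : E →L[ℝ] F) (x z : E) (r : ℝ) :
    ∫ y in ball z r, L (y - x) ∂μ = μ.real (ball z r) • L (z - x) := by
  have hsplit : (fun y ↦ L (y - x)) = fun y ↦ L (y - z) + L (z - x) :=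
    funext fun y ↦ by rw [← map_add, sub_add_sub_cancel]
  rw [hsplit, integral_add (f := fun y ↦ L (y - z)) ?_ (integrableOn_const measure_ball_lt_top.ne),
    setIntegral_ball_odd_eq_zero μ (map_neg L) z r, setIntegral_const, zero_add]
  exact (L.continuous.comp (continuous_sub_right z)).locallyIntegrable.integrableOn_ball z r

theorem setAverage_ball_add_clm_sub_add [CompleteSpace F] (a : F) (L : E →L[ℝ] F) (x z : E)
    {r : ℝ} (hr : 0 < r) {g : E → F} (hg : LocallyIntegrable g μ) :
    ⨍ y in ball z r, (a + L (y - x) + g y) ∂μ = a + L (z - x) + ⨍ y in ball z r, g y ∂μ := by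
  have hV : μ.real (ball z r) ≠ 0 :=
    (ENNReal.toReal_pos (measure_ball_pos μ z hr).ne' measure_ball_lt_top.ne).ne'
  have hL : IntegrableOn (fun y ↦ L (y - x)) (ball z r) μ :=
    (L.continuous.comp (continuous_sub_right x)).locallyIntegrable.integrableOn_ball z r
  rw [setAverage_eq, setAverage_eq,
    integral_add (f := fun y ↦ a + L (y - x))
      ((integrableOn_const measure_ball_lt_top.ne).add hL) (hg.integrableOn_ball z r),
    integral_add (f := fun _ ↦ a) (integrableOn_const measure_ball_lt_top.ne) hL,
    setIntegral_const, setIntegral_ball_clm_sub, smul_add, smul_add, inv_smul_smul₀ hV,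
    inv_smul_smul₀ hV]

theorem norm_setAverage_ball_sub_setAverage_ball_le {g : E → F} (hg : LocallyIntegrable g μ)
    {x y : E} {r M : ℝ} (hr : 0 < r)
    (hbound : ∀ z ∈ ball x r ∪ ball y r, ‖g z‖ ≤ (r + dist x y) * M) :
    ‖⨍ z in ball x r, g z ∂μ - ⨍ z in ball y r, g z ∂μ‖
      ≤ 3 * (finrank ℝ E + 1) * dist x y * M := by
  set V := μ.real (ball y r)
  have hVx : μ.real (ball x r) = V :=
    (Measure.addHaar_real_ball_center μ x r).trans (Measure.addHaar_real_ball_center μ y r).symm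
  have hV : 0 < V := ENNReal.toReal_pos (measure_ball_pos μ y hr).ne' measure_ball_lt_top.ne
  have hM : 0 ≤ M := nonneg_of_mul_nonneg_right
    ((norm_nonneg _).trans (hbound x (.inl (mem_ball_self hr)))) (by positivity)
  have hxy := addHaar_real_ball_sdiff_ball_le μ (x := x) (y := y) hr
  have hyx := addHaar_real_ball_sdiff_ball_le μ (x := y) (y := x) hr
  rw [dist_comm, hVx] at hyx
  rw [setAverage_eq, setAverage_eq, hVx, ← smul_sub, norm_smul,
    Real.norm_of_nonneg (inv_nonneg.2 hV.le), inv_mul_le_iff₀ hV]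
  calc ‖∫ z in ball x r, g z ∂μ - ∫ z in ball y r, g z ∂μ‖
      ≤ (r + dist x y) * M * (μ.real (ball x r \ ball y r) + μ.real (ball y r \ ball x r)) :=
        norm_setIntegral_sub_setIntegral_le measurableSet_ball measurableSet_ball
          measure_ball_lt_top.ne measure_ball_lt_top.ne
          (hg.integrableOn_ball x r) (hg.integrableOn_ball y r) hbound
    _ = M * ((r + dist x y) * μ.real (ball x r \ ball y r)
          + (r + dist x y) * μ.real (ball y r \ ball x r)) := by ring
    _ ≤ M * (2 * (3 / 2 * (finrank ℝ E + 1) * dist x y * V)) := by gcongr; linarith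
    _ = V * (3 * (finrank ℝ E + 1) * dist x y * M) := by ring

/-- Lemma 3.4: if `f(y) = f(x) + D·(y−x) + |y−x| u(y−x)`, then for all `h` and `r > 0`,
`|f_r(x+h) − f_r(x) − D·h| ≤ C_n |h| sup_{|a|≤r+|h|} |u(a)|`, where `f_r` denotes ball
averages and `C_n` depends only on the dimension. -/
theorem average_linear_approximation
    (n : ℕ) :
    ∃ C : ℝ, 0 < C ∧
      ∀ (f : EuclideanSpace ℝ (Fin n) → ℝ), LocallyIntegrable f volume →
      ∀ (x D : EuclideanSpace ℝ (Fin n)) (u : EuclideanSpace ℝ (Fin n) → ℝ),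
        (∀ y, f y = f x + ⟪D, y - x⟫ + ‖y - x‖ * u (y - x)) →
        ∀ (h : EuclideanSpace ℝ (Fin n)) (r : ℝ), 0 < r →
        ∀ M : ℝ, (∀ a : EuclideanSpace ℝ (Fin n), ‖a‖ ≤ r + ‖h‖ → |u a| ≤ M) →
        |(⨍ y in ball (x + h) r, f y ∂volume) - (⨍ y in ball x r, f y ∂volume) - ⟪D, h⟫| ≤
          C * ‖h‖ * M := by
  refine ⟨3 * (n + 1), by positivity, ?_⟩
  intro f hf x D u hu h r hr M hM
  set g := fun y ↦ ‖y - x‖ * u (y - x)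
  have hfg : ∀ y, f y = f x + innerSL ℝ D (y - x) + g y := hu
  have hg : LocallyIntegrable g volume := by
    have : g = f - fun y ↦ f x + innerSL ℝ D (y - x) :=
      funext fun y ↦ by rw [Pi.sub_apply, hfg y]; ring
    rw [this]
    exact hf.sub (continuous_const.add
      ((innerSL ℝ D).continuous.comp (continuous_sub_right x))).locallyIntegrable
  have havg : ∀ z,
      ⨍ y in ball z r, f y ∂volume = f x + ⟪D, z - x⟫ + ⨍ y in ball z r, g y ∂volume := fun z ↦ by
    conv_lhs => rw [funext hfg]
    exact setAverage_ball_add_clm_sub_add volume (f x) (innerSL ℝ D) x z hr hg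
  have hbound : ∀ z ∈ ball (x + h) r ∪ ball x r, ‖g z‖ ≤ (r + dist (x + h) x) * M := by
    intro z hz
    have hz' : ‖z - x‖ ≤ r + ‖h‖ := by
      refine (mem_ball_iff_norm.1 ?_).le
      rcases hz with hz | hz
      exacts [ball_subset_ball' (by rw [dist_self_add_left]) hz,
        ball_subset_ball (by simp) hz]
    rw [dist_self_add_left, Real.norm_eq_abs, abs_mul, abs_norm]
    exact mul_le_mul hz' (hM _ hz') (abs_nonneg _) ((norm_nonneg _).trans hz')
  calc |(⨍ y in ball (x + h) r, f y) - (⨍ y in ball x r, f y) - ⟪D, h⟫|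
      = ‖(⨍ y in ball (x + h) r, g y) - ⨍ y in ball x r, g y‖ := by
        rw [havg, havg, add_sub_cancel_left, sub_self, inner_zero_right, Real.norm_eq_abs]
        congr 1; ring
    _ ≤ 3 * (finrank ℝ (EuclideanSpace ℝ (Fin n)) + 1) * dist (x + h) x * M :=
        norm_setAverage_ball_sub_setAverage_ball_le volume hg hr hbound
    _ = 3 * (n + 1) * ‖h‖ * M := by rw [finrank_euclideanSpace_fin, dist_self_add_left]
end

section
/- Let {f_k}_{k∈ℕ} be a countable family of C¹ functions f_k : ℝⁿ → ℝ whose gradients {Df_k} are locally uniformly bounded and equicontinuous, and suppose F(x) = sup_k f_k(x) is finite for all x. Then F is locally Lipschitz and directionally differentiable at every point (all one-sided directional derivatives exist). -/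
/-!
Each `f k` is Lipschitz on a ball with the common bound of the derivatives as constant, and a
supremum of uniformly Lipschitz functions is Lipschitz.

For the directional derivative, equicontinuity of the derivatives makes the first-order Taylor
expansions of the `f k` at `x` uniform in `k`, so `F (x + t • θ)` agrees up to `o(t)` with
`φ t = ⨆ k, (f k x + t * Df_k(x) θ)`. As a supremum of affine functions `φ` is convex, and convex
functions of one real variable have one-sided derivatives.
-/

open Filter Topology Metric Set Asymptotics

open scoped NNReal

section Supremum

variable {ι : Type*} [Nonempty ι]

theorem abs_ciSup_sub_ciSup_le {u v : ι → ℝ} {c : ℝ} (hu : BddAbove (range u))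
    (h : ∀ i, |u i - v i| ≤ c) : |(⨆ i, u i) - ⨆ i, v i| ≤ c := by
  have hv : BddAbove (range v) := by
    obtain ⟨B, hB⟩ := hu
    exact ⟨B + c, forall_mem_range.2 fun i => by
      linarith [hB (mem_range_self i), (abs_le.1 (h i)).1]⟩
  rw [abs_sub_le_iff]
  constructor
  · refine sub_le_iff_le_add.2 (ciSup_le fun i => ?_)
    linarith [le_ciSup hv i, (abs_le.1 (h i)).2]
  · refine sub_le_iff_le_add.2 (ciSup_le fun i => ?_)
    linarith [le_ciSup hu i, (abs_le.1 (h i)).1]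

theorem LipschitzOnWith.ciSup {α : Type*} [PseudoMetricSpace α] {f : ι → α → ℝ} {K : ℝ≥0}
    {s : Set α} (hf : ∀ i, LipschitzOnWith K (f i) s)
    (hbdd : ∀ x ∈ s, BddAbove (range fun i => f i x)) :
    LipschitzOnWith K (fun x => ⨆ i, f i x) s :=
  LipschitzOnWith.of_dist_le_mul fun x hx y hy =>
    abs_ciSup_sub_ciSup_le (hbdd x hx) fun i => (hf i).dist_le_mul x hx y hy

theorem ConvexOn.ciSup {E : Type*} [AddCommMonoid E] [Module ℝ E] {s : Set E} {f : ι → E → ℝ}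
    (hf : ∀ i, ConvexOn ℝ s (f i)) (hbdd : ∀ x ∈ s, BddAbove (range fun i => f i x)) :
    ConvexOn ℝ s (fun x => ⨆ i, f i x) := by
  refine ⟨(hf (Classical.arbitrary ι)).1, fun x hx y hy a b ha hb hab => ciSup_le fun i => ?_⟩
  calc f i (a • x + b • y) ≤ a • f i x + b • f i y := (hf i).2 hx hy ha hb hab
    _ ≤ a • (⨆ i, f i x) + b • ⨆ i, f i y := by
      gcongr
      exacts [le_ciSup (hbdd x hx) i, le_ciSup (hbdd y hy) i]

theorem exists_tendsto_slope_ciSup_affine {b a : ι → ℝ} (hb : BddAbove (range b))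
    (ha : BddAbove (range fun i => |a i|)) :
    ∃ d, Tendsto (slope (fun t => ⨆ i, (b i + t * a i)) 0) (𝓝[>] 0) (𝓝 d) := by
  obtain ⟨B, hB⟩ := hb
  obtain ⟨M, hM⟩ := ha
  have hbdd : ∀ t, BddAbove (range fun i => b i + t * a i) := fun t =>
    ⟨B + |t| * M, forall_mem_range.2 fun i => by
      have hbi := hB (mem_range_self i)
      have hai : |a i| ≤ M := hM (mem_range_self i)
      have : t * a i ≤ |t| * M := (le_abs_self _).trans
        (by rw [abs_mul]; exact mul_le_mul_of_nonneg_left hai (abs_nonneg t))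
      linarith⟩
  have hconvex : ConvexOn ℝ univ (fun t => ⨆ i, (b i + t * a i)) :=
    ConvexOn.ciSup (fun i => (convexOn_const (b i) convex_univ).add
      ((LinearMap.mul ℝ ℝ).flip (a i) |>.convexOn convex_univ)) fun t _ => hbdd t
  exact ⟨_, (hasDerivWithinAt_iff_tendsto_slope' (lt_irrefl 0)).1
    (hconvex.hasDerivWithinAt_rightDeriv_of_mem_interior (by simp))⟩

end Supremum

section Calculus

variable {ι E : Type*} [NormedAddCommGroup E] [NormedSpace ℝ E]

theorem lipschitzOnWith_ciSup_of_norm_fderiv_le [Nonempty ι] {f : ι → E → ℝ} {s : Set E}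
    {C : ℝ≥0} (hs : Convex ℝ s) (hf : ∀ i, Differentiable ℝ (f i))
    (hC : ∀ i, ∀ y ∈ s, ‖fderiv ℝ (f i) y‖ ≤ C) (hbdd : ∀ y ∈ s, BddAbove (range fun i => f i y)) :
    LipschitzOnWith C (fun y => ⨆ i, f i y) s :=
  LipschitzOnWith.ciSup (fun i => hs.lipschitzOnWith_of_nnnorm_fderiv_le
    (fun y _ => (hf i).differentiableAt) fun y hy => by exact_mod_cast hC i y hy) hbdd

theorem EquicontinuousAt.eventually_norm_sub_sub_fderiv_le {F : Type*} [NormedAddCommGroup F]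
    [NormedSpace ℝ F] {f : ι → E → F} {x : E} (hf : ∀ i, Differentiable ℝ (f i))
    (heq : EquicontinuousAt (fun i => fderiv ℝ (f i)) x) {ε : ℝ} (hε : 0 < ε) :
    ∀ᶠ y in 𝓝 x, ∀ i, ‖f i y - f i x - fderiv ℝ (f i) x (y - x)‖ ≤ ε * ‖y - x‖ := by
  obtain ⟨δ, hδ, hclose⟩ := Metric.equicontinuousAt_iff.1 heq ε hε
  filter_upwards [ball_mem_nhds x hδ] with y hy i
  refine (convex_ball x δ).norm_image_sub_le_of_norm_fderiv_le'
    (fun z _ => (hf i).differentiableAt) (fun z hz => ?_) (mem_ball_self hδ) hy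
  rw [← dist_eq_norm, dist_comm]
  exact (hclose z hz i).le

theorem isLittleO_ciSup_sub_ciSup_linearization [Nonempty ι] {f : ι → E → ℝ} {x : E}
    (hf : ∀ i, Differentiable ℝ (f i)) (heq : EquicontinuousAt (fun i => fderiv ℝ (f i)) x)
    (hbdd : ∀ y, BddAbove (range fun i => f i y)) :
    (fun y => (⨆ i, f i y) - ⨆ i, (f i x + fderiv ℝ (f i) x (y - x))) =o[𝓝 x] fun y => y - x := by
  refine IsLittleO.of_bound fun ε hε => ?_
  filter_upwards [heq.eventually_norm_sub_sub_fderiv_le hf hε] with y hy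
  exact abs_ciSup_sub_ciSup_le (hbdd y) fun i => by
    simpa only [sub_sub, Real.norm_eq_abs] using hy i

theorem exists_tendsto_slope_ciSup_of_equicontinuousAt [Nonempty ι] {f : ι → E → ℝ} {x : E}
    (hf : ∀ i, Differentiable ℝ (f i)) (heq : EquicontinuousAt (fun i => fderiv ℝ (f i)) x)
    (hderiv : BddAbove (range fun i => ‖fderiv ℝ (f i) x‖))
    (hbdd : ∀ y, BddAbove (range fun i => f i y)) (θ : E) :
    ∃ d, Tendsto (fun t : ℝ => ((⨆ i, f i (x + t • θ)) - ⨆ i, f i x) / t) (𝓝[>] 0) (𝓝 d) := by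
  obtain ⟨M, hM⟩ := hderiv
  have hslope_bdd : BddAbove (range fun i => |fderiv ℝ (f i) x θ|) :=
    ⟨M * ‖θ‖, forall_mem_range.2 fun i =>
      ((fderiv ℝ (f i) x).le_opNorm θ).trans (by gcongr; exact hM (mem_range_self i))⟩
  obtain ⟨d, hd⟩ := exists_tendsto_slope_ciSup_affine (hbdd x) hslope_bdd
  have hray : Tendsto (fun t : ℝ => x + t • θ) (𝓝[>] 0) (𝓝 x) :=
    ((by fun_prop : Continuous fun t : ℝ => x + t • θ).tendsto' 0 x (by simp)).mono_left
      nhdsWithin_le_nhds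
  have hsmul : (fun t : ℝ => t • θ) =O[𝓝[>] 0] fun t => t :=
    IsBigO.of_bound ‖θ‖ (Eventually.of_forall fun t => by rw [norm_smul, mul_comm])
  have herror := (((isLittleO_ciSup_sub_ciSup_linearization hf heq hbdd).comp_tendsto
    hray).trans_isBigO (by simpa only [Function.comp_def, add_sub_cancel_left] using hsmul)
    ).tendsto_div_nhds_zero
  have hsum := hd.add herror
  rw [add_zero] at hsum
  refine ⟨d, hsum.congr fun t => ?_⟩
  simp only [Function.comp_apply, add_sub_cancel_left, map_smul, smul_eq_mul, slope_def_field,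
    zero_mul, add_zero, sub_zero]
  ring

end Calculus

/-- If `{f k}` is a countable family of `C¹` functions whose derivatives are locally
uniformly bounded and equicontinuous, and `F = sup_k f k` is (pointwise) finite, then
`F` is locally Lipschitz and all one-sided directional derivatives of `F` exist. -/
theorem pointwise_sup_directionally_differentiable
    (n : ℕ) (f : ℕ → EuclideanSpace ℝ (Fin n) → ℝ)
    (hC1 : ∀ k, ContDiff ℝ 1 (f k))
    (hbdd : ∀ R : ℝ, 0 < R → ∃ M : ℝ, ∀ k (x : EuclideanSpace ℝ (Fin n)), ‖x‖ ≤ R →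
      ‖fderiv ℝ (f k) x‖ ≤ M)
    (heq : ∀ R : ℝ, 0 < R →
      EquicontinuousOn (fun k => fderiv ℝ (f k)) (closedBall (0 : EuclideanSpace ℝ (Fin n)) R))
    (hfin : ∀ x, BddAbove (Set.range fun k => f k x)) :
    LocallyLipschitz (fun x => ⨆ k, f k x) ∧
    ∀ (x θ : EuclideanSpace ℝ (Fin n)), ‖θ‖ = 1 → ∃ d : ℝ,
      Tendsto (fun t : ℝ => ((⨆ k, f k (x + t • θ)) - ⨆ k, f k x) / t)
        (𝓝[>] (0 : ℝ)) (𝓝 d) := by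
  have hdiff : ∀ k, Differentiable ℝ (f k) := fun k => (hC1 k).differentiable one_ne_zero
  have hR : ∀ x : EuclideanSpace ℝ (Fin n), 0 < ‖x‖ + 1 := fun x => by positivity
  refine ⟨fun x => ?_, fun x θ _ => ?_⟩
  · obtain ⟨M, hM⟩ := hbdd _ (hR x)
    refine ⟨M.toNNReal, ball x 1, ball_mem_nhds x one_pos,
      lipschitzOnWith_ciSup_of_norm_fderiv_le (convex_ball x 1) hdiff (fun k y hy => ?_)
        fun y _ => hfin y⟩
    exact (hM k y (norm_le_of_mem_closedBall (ball_subset_closedBall hy))).trans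
      (Real.le_coe_toNNReal M)
  · obtain ⟨M, hM⟩ := hbdd _ (hR x)
    have hx : x ∈ ball 0 (‖x‖ + 1) := by simp
    have hequi : EquicontinuousAt (fun k => fderiv ℝ (f k)) x :=
      equicontinuousAt_iff_continuousAt.2 ((equicontinuousWithinAt_iff_continuousWithinAt.1
        (heq _ (hR x) x (ball_subset_closedBall hx))).continuousAt (closedBall_mem_nhds_of_mem hx))
    exact exists_tendsto_slope_ciSup_of_equicontinuousAt hdiff hequi
      ⟨M, forall_mem_range.2 fun k => hM k x (by linarith)⟩ hfin θ
end
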